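/- arXiv:2404.10653 — 5 statements merged into one kernel-verified Lean document; each statement's English description precedes it below -/
import Mathlib

section
/- Non-deterministic monoidal automata and regular monoidal grammars define the same class of languages: for every non-deterministic monoidal automaton there is a regular monoidal grammar with the same language, and vice versa. -/
/-! String diagrams over a single-sorted polygraph: a generator set `G` with
arity and coarity functions. Morphisms of the free strict monoidal category are
terms built from identities, generators, composition and tensor. -/

inductive Diag (G : Type) (ar co : G → ℕ) : ℕ → ℕ → Type
  | id (n : ℕ) : Diag G ar co n n
  | gen (g : G) : Diag G ar co (ar g) (co g)
  | comp {n m k : ℕ} : Diag G ar co n m → Diag G ar co m k → Diag G ar co n k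
  | tensor {n m n' m' : ℕ} : Diag G ar co n m → Diag G ar co n' m' → Diag G ar co (n + n') (m + m')

def Diag.cast {G : Type} {ar co : G → ℕ} {n m n' m' : ℕ} (h1 : n = n') (h2 : m = m')
    (d : Diag G ar co n m) : Diag G ar co n' m' := by subst h1; subst h2; exact d

/-- A non-deterministic monoidal automaton over the single-sorted polygraph `(G, ar, co)`:
a finite set of states `Q`, for each generator `γ : n → m` a transition relation
`Qⁿ → 𝒫(Qᵐ)` (encoded as a set of pairs of state words of the appropriate lengths),
and initial and final state words. -/
structure NDMA (G : Type) (ar co : G → ℕ) where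
  Q : Type
  finQ : Finite Q
  δ : G → Set (List Q × List Q)
  δ_len : ∀ g p, p ∈ δ g → p.1.length = ar g ∧ p.2.length = co g
  init : List Q
  final : List Q

/-- The inductive extension of the transitions of an automaton to all string diagrams:
`Run A s q q'` holds iff `q' ∈ δ̂(q, s)`. -/
inductive NDMA.Run {G : Type} {ar co : G → ℕ} (A : NDMA G ar co) :
    ∀ {n m : ℕ}, Diag G ar co n m → List A.Q → List A.Q → Prop
  | id {n : ℕ} {q : List A.Q} (h : q.length = n) : A.Run (.id n) q q
  | gen {g : G} {q q' : List A.Q} (h : (q, q') ∈ A.δ g) : A.Run (.gen g) q q'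
  | comp {n m k} {s : Diag G ar co n m} {t : Diag G ar co m k} {q r p : List A.Q} :
      A.Run s q r → A.Run t r p → A.Run (s.comp t) q p
  | tensor {n m n' m'} {s : Diag G ar co n m} {t : Diag G ar co n' m'}
      {q r q' r' : List A.Q} :
      A.Run s q r → A.Run t q' r' → A.Run (s.tensor t) (q ++ q') (r ++ r')

/-- The language of a non-deterministic monoidal automaton. -/
def NDMA.language {G : Type} {ar co : G → ℕ} (A : NDMA G ar co) :
    Set ((n : ℕ) × (m : ℕ) × Diag G ar co n m) :=
  {s | A.Run s.2.2 A.init A.final}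

/-- A multi-sorted polygraph. -/
structure Polygraph where
  S : Type
  Gen : List S → List S → Type

/-- String diagrams (morphisms of the free strict monoidal category) over a polygraph. -/
inductive MDiag (P : Polygraph) : List P.S → List P.S → Type
  | id (X : List P.S) : MDiag P X X
  | gen {A B : List P.S} (f : P.Gen A B) : MDiag P A B
  | comp {A B C : List P.S} : MDiag P A B → MDiag P B C → MDiag P A C
  | tensor {A B A' B' : List P.S} : MDiag P A B → MDiag P A' B' → MDiag P (A ++ A') (B ++ B')

/-- A regular monoidal grammar over the single-sorted polygraph `(G, ar, co)`:
a morphism of finite polygraphs from a polygraph of states into `(G, ar, co)`,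
together with initial and final sorts. -/
structure RegGrammar (G : Type) (ar co : G → ℕ) where
  Q : Type
  finQ : Finite Q
  Gen : List Q → List Q → Type
  finGen : Finite ((a : List Q) × (b : List Q) × Gen a b)
  label : ∀ {a b : List Q}, Gen a b → G
  label_ar : ∀ {a b : List Q} (e : Gen a b), ar (label e) = a.length
  label_co : ∀ {a b : List Q} (e : Gen a b), co (label e) = b.length
  init : List Q
  final : List Q

/-- The free monoidal functor induced by a regular monoidal grammar, relabelling
diagrams over the state polygraph to diagrams over `(G, ar, co)`. -/
def RegGrammar.relabel {G : Type} {ar co : G → ℕ} (R : RegGrammar G ar co) :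
    ∀ {a b : List R.Q}, MDiag ⟨R.Q, R.Gen⟩ a b → Diag G ar co a.length b.length
  | _, _, .id X => .id X.length
  | _, _, .gen e => (Diag.gen (R.label e)).cast (R.label_ar e) (R.label_co e)
  | _, _, .comp s t => (R.relabel s).comp (R.relabel t)
  | _, _, .tensor s t =>
      ((R.relabel s).tensor (R.relabel t)).cast
        List.length_append.symm List.length_append.symm

/-- The language of a regular monoidal grammar: the image of the hom-set from the
initial to the final sorts under the free monoidal functor. -/
def RegGrammar.language {G : Type} {ar co : G → ℕ} (R : RegGrammar G ar co) :
    Set ((n : ℕ) × (m : ℕ) × Diag G ar co n m) :=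
  {s | ∃ d : MDiag ⟨R.Q, R.Gen⟩ R.init R.final,
    s = ⟨R.init.length, R.final.length, R.relabel d⟩}

/-! A grammar is an automaton whose transitions are its generators, read through their labels:
a run of the automaton on a diagram from `q` to `q'` is then exactly a diagram over the state
polygraph from `q` to `q'` relabelling to it. Conversely, an automaton is recovered from the
grammar whose generators `a → b` are the labels `g` with `(a, b) ∈ δ g`; this grammar is finite
because `G` is, and each `δ g` only contains words of the fixed lengths `ar g` and `co g`. -/

variable {G : Type} {ar co : G → ℕ}

theorem Diag.cast_rfl {n m : ℕ} (d : Diag G ar co n m) : d.cast rfl rfl = d := rfl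

theorem NDMA.Run.cast {A : NDMA G ar co} {n m n' m' : ℕ} (h1 : n = n') (h2 : m = m')
    {s : Diag G ar co n m} {q q' : List A.Q} (h : A.Run s q q') :
    A.Run (s.cast h1 h2) q q' := by
  subst h1 h2
  exact h

namespace RegGrammar

variable (R : RegGrammar G ar co)

def toNDMA : NDMA G ar co where
  Q := R.Q
  finQ := R.finQ
  δ g := {p | ∃ e : R.Gen p.1 p.2, R.label e = g}
  δ_len := by
    rintro g p ⟨e, rfl⟩
    exact ⟨(R.label_ar e).symm, (R.label_co e).symm⟩
  init := R.init
  final := R.final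

theorem toNDMA_run_relabel :
    ∀ {a b : List R.Q} (d : MDiag ⟨R.Q, R.Gen⟩ a b), R.toNDMA.Run (R.relabel d) a b
  | _, _, .id _ => .id rfl
  | _, _, .gen e => .cast _ _ (.gen ⟨e, rfl⟩)
  | _, _, .comp s t => .comp (toNDMA_run_relabel s) (toNDMA_run_relabel t)
  | _, _, .tensor s t => .cast _ _ (.tensor (toNDMA_run_relabel s) (toNDMA_run_relabel t))

theorem exists_relabel_of_toNDMA_run {n m : ℕ} {s : Diag G ar co n m} {q q' : List R.toNDMA.Q}
    (h : R.toNDMA.Run s q q') :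
    ∃ (h1 : n = q.length) (h2 : m = q'.length) (d : MDiag ⟨R.Q, R.Gen⟩ q q'),
      R.relabel d = s.cast h1 h2 := by
  induction h with
  | @id n q hq =>
    subst hq
    refine ⟨rfl, rfl, MDiag.id (P := ⟨R.Q, R.Gen⟩) q, ?_⟩
    rfl
  | @gen g q q' hg =>
    obtain ⟨e, rfl⟩ := hg
    exact ⟨R.label_ar e, R.label_co e, .gen e, rfl⟩
  | comp _ _ ih₁ ih₂ =>
    obtain ⟨rfl, rfl, d₁, hd₁⟩ := ih₁
    obtain ⟨_, rfl, d₂, hd₂⟩ := ih₂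
    refine ⟨rfl, rfl, d₁.comp d₂, ?_⟩
    change (R.relabel d₁).comp (R.relabel d₂) = _
    rw [hd₁, hd₂]
    rfl
  | tensor _ _ ih₁ ih₂ =>
    obtain ⟨rfl, rfl, d₁, hd₁⟩ := ih₁
    obtain ⟨rfl, rfl, d₂, hd₂⟩ := ih₂
    refine ⟨List.length_append.symm, List.length_append.symm, d₁.tensor d₂, ?_⟩
    change ((R.relabel d₁).tensor (R.relabel d₂)).cast _ _ = _
    rw [hd₁, hd₂, Diag.cast_rfl, Diag.cast_rfl]
    rfl

theorem toNDMA_language : R.toNDMA.language = R.language := by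
  ext ⟨n, m, s⟩
  constructor
  · intro h
    obtain ⟨rfl, rfl, d, hd⟩ := R.exists_relabel_of_toNDMA_run (s := s) h
    exact ⟨d, congrArg (fun t => (⟨_, _, t⟩ : (n : ℕ) × (m : ℕ) × Diag G ar co n m)) hd.symm⟩
  · rintro ⟨d, hd⟩
    rw [hd]
    exact R.toNDMA_run_relabel d

end RegGrammar

namespace NDMA

variable (A : NDMA G ar co)

theorem finite_δ (g : G) : (A.δ g).Finite :=
  have := A.finQ
  ((List.finite_length_eq A.Q (ar g)).prod (List.finite_length_eq A.Q (co g))).subset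
    fun p hp => A.δ_len g p hp

theorem finite_transitions [Finite G] :
    Finite ((a : List A.Q) × (b : List A.Q) × {g : G // (a, b) ∈ A.δ g}) :=
  have := fun g => (A.finite_δ g).to_subtype
  Finite.of_surjective (fun x : (g : G) × A.δ g => ⟨x.2.1.1, x.2.1.2, x.1, x.2.2⟩)
    fun ⟨a, b, g, h⟩ => ⟨⟨g, (a, b), h⟩, rfl⟩

def toRegGrammar [Finite G] : RegGrammar G ar co where
  Q := A.Q
  finQ := A.finQ
  Gen a b := {g : G // (a, b) ∈ A.δ g}
  finGen := A.finite_transitions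
  label e := e.1
  label_ar e := (A.δ_len _ _ e.2).1.symm
  label_co e := (A.δ_len _ _ e.2).2.symm
  init := A.init
  final := A.final

theorem toRegGrammar_toNDMA [Finite G] : A.toRegGrammar.toNDMA = A := by
  obtain ⟨Q, finQ, δ, δ_len, init, final⟩ := A
  change NDMA.mk _ _ _ _ _ _ = _
  congr
  funext g
  ext p
  exact ⟨by rintro ⟨⟨g, h⟩, rfl⟩; exact h, fun h => ⟨⟨g, h⟩, rfl⟩⟩

end NDMA

/-- Non-deterministic monoidal automata and regular monoidal grammars define the
same class of languages: for every non-deterministic monoidal automaton there is a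
regular monoidal grammar with the same language, and vice versa. -/
theorem ndma_iff_regGrammar (G : Type) (ar co : G → ℕ) [Finite G] :
    (∀ A : NDMA G ar co, ∃ R : RegGrammar G ar co, A.language = R.language) ∧
    (∀ R : RegGrammar G ar co, ∃ A : NDMA G ar co, R.language = A.language) :=
  ⟨fun A => ⟨A.toRegGrammar,
      (congrArg NDMA.language A.toRegGrammar_toNDMA).symm.trans A.toRegGrammar.toNDMA_language⟩,
    fun R => ⟨R.toNDMA, R.toNDMA_language.symm⟩⟩
end

section
/- Pumping lemma for regular monoidal languages: if L is a regular monoidal language, then for every k ≥ 1 there exists n such that any s ∈ L admitting a factorization s = s₀ ⨾ s₁ ⨾ ... ⨾ s_m into m ≥ n non-identity morphisms with all intermediate boundary widths between 1 and k, has indices i < j with equal boundary widths such that, writing s' = s₀⨾...⨾s_i, s'' = s_{i+1}⨾...⨾s_j, s''' = s_{j+1}⨾...⨾s_m, the morphism s' ⨾ (s'')^a ⨾ s''' is in L for all a ≥ 0. -/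
/-- A factorization of a morphism into a chain of composable diagrams. -/
inductive Chain (G : Type) (ar co : G → ℕ) : ℕ → ℕ → Type
  | nil (n : ℕ) : Chain G ar co n n
  | cons {n m k : ℕ} : Diag G ar co n m → Chain G ar co m k → Chain G ar co n k

namespace Chain
variable {G : Type} {ar co : G → ℕ}

/-- The composite morphism of a chain. -/
def comp : ∀ {n m : ℕ}, Chain G ar co n m → Diag G ar co n m
  | _, _, .nil n => .id n
  | _, _, .cons s c => s.comp c.comp

/-- The number of factors of a chain. -/
def length : ∀ {n m : ℕ}, Chain G ar co n m → ℕ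
  | _, _, .nil _ => 0
  | _, _, .cons _ c => c.length + 1

/-- Concatenation of chains. -/
def append : ∀ {n m k : ℕ}, Chain G ar co n m → Chain G ar co m k → Chain G ar co n k
  | _, _, _, .nil _, c => c
  | _, _, _, .cons s c, c' => .cons s (c.append c')

/-- All boundary widths `k_i` occurring in the chain (including its endpoints)
lie between `1` and `k`. -/
def WidthsLe (k : ℕ) : ∀ {n m : ℕ}, Chain G ar co n m → Prop
  | n, _, .nil _ => 1 ≤ n ∧ n ≤ k
  | n, _, .cons _ c => (1 ≤ n ∧ n ≤ k) ∧ c.WidthsLe k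

end Chain

/-- Identity morphisms (diagrams equal to an identity for structural reasons). -/
inductive Diag.IsId {G : Type} {ar co : G → ℕ} : ∀ {n m : ℕ}, Diag G ar co n m → Prop
  | id (n : ℕ) : Diag.IsId (.id n)
  | comp {n : ℕ} {s t : Diag G ar co n n} : s.IsId → t.IsId → (s.comp t).IsId
  | tensor {n m : ℕ} {s : Diag G ar co n n} {t : Diag G ar co m m} :
      s.IsId → t.IsId → (s.tensor t).IsId

/-- All factors of the chain are non-identity morphisms. -/
def Chain.AllNonId {G : Type} {ar co : G → ℕ} : ∀ {n m : ℕ}, Chain G ar co n m → Prop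
  | _, _, .nil _ => True
  | _, _, .cons s c => ¬ s.IsId ∧ c.AllNonId

/-- Iterated composition `s^a` of an endomorphism diagram. -/
def Diag.pow {G : Type} {ar co : G → ℕ} {n : ℕ} (s : Diag G ar co n n) : ℕ → Diag G ar co n n
  | 0 => .id n
  | a + 1 => s.comp (s.pow a)


/-!
A run of the automaton on `s = s₁ ⨾ ⋯ ⨾ s_m` passes through a state word of length `k_i` at
each of the `m` boundaries. When all `k_i ≤ k`, these words range over a finite set, so for `m`
beyond its size some word `r` occurs at two boundaries `i < j`. The run on `s_{i+1} ⨾ ⋯ ⨾ s_j`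
then goes from `r` to `r`, and can be repeated any number of times, or skipped.
-/

theorem List.exists_eq_append_cons_append_cons_of_not_nodup {α : Type*} {l : List α}
    (h : ¬ l.Nodup) : ∃ (l₁ : List α) (a : α) (l₂ l₃ : List α), l = l₁ ++ a :: (l₂ ++ a :: l₃) := by
  obtain ⟨a, ha⟩ : ∃ a, List.Sublist [a, a] l := by simpa [List.nodup_iff_sublist] using h
  obtain ⟨r₁, r₂, rfl, h₁, h₂⟩ := List.cons_sublist_iff.1 ha
  obtain ⟨l₁, l₂, rfl⟩ := List.append_of_mem h₁
  obtain ⟨l₃, l₄, rfl⟩ := List.append_of_mem (List.singleton_sublist.1 h₂)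
  exact ⟨l₁, a, l₂ ++ l₃, l₄, by simp⟩

theorem List.Nodup.length_le_ncard {α : Type*} {l : List α} (hl : l.Nodup) {s : Set α}
    (hs : s.Finite) (hsub : ∀ x ∈ l, x ∈ s) : l.length ≤ s.ncard := by
  classical
  rw [← List.toFinset_card_of_nodup hl, ← Set.ncard_coe_finset]
  exact Set.ncard_le_ncard (fun x hx => hsub x (List.mem_toFinset.1 hx)) hs

def Diag.GenFree {G : Type} {ar co : G → ℕ} : ∀ {n m : ℕ}, Diag G ar co n m → Prop
  | _, _, .id _ => True
  | _, _, .gen _ => False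
  | _, _, .comp s t => s.GenFree ∧ t.GenFree
  | _, _, .tensor s t => s.GenFree ∧ t.GenFree

theorem Chain.source_le_of_widthsLe {G : Type} {ar co : G → ℕ} {k n m : ℕ}
    (c : Chain G ar co n m) (hc : c.WidthsLe k) : n ≤ k := by
  cases c with
  | nil => exact hc.2
  | cons => exact hc.1.2

namespace NDMA

variable {G : Type} {ar co : G → ℕ} {A : NDMA G ar co}

theorem Run.length_eq {n m : ℕ} {s : Diag G ar co n m} {q p : List A.Q} (h : A.Run s q p) :
    q.length = n ∧ p.length = m := by
  induction h with
  | id h => exact ⟨h, h⟩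
  | gen h => exact A.δ_len _ _ h
  | comp _ _ ih₁ ih₂ => exact ⟨ih₁.1, ih₂.2⟩
  | tensor _ _ ih₁ ih₂ => simp [ih₁.1, ih₁.2, ih₂.1, ih₂.2]

/- Stated for generator-free diagrams because `cases` cannot invert a run on `.id n`:
unifying `.id n` with `.gen g` gets stuck on `ar g = co g`. -/
theorem Run.eq_of_genFree {n m : ℕ} {s : Diag G ar co n m} {q p : List A.Q} (h : A.Run s q p)
    (hs : s.GenFree) : q = p := by
  induction h with
  | id _ => rfl
  | gen _ => exact hs.elim
  | comp _ _ ih₁ ih₂ => exact (ih₁ hs.1).trans (ih₂ hs.2)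
  | tensor _ _ ih₁ ih₂ => rw [ih₁ hs.1, ih₂ hs.2]

theorem Run.exists_of_comp {n m k : ℕ} {s : Diag G ar co n m} {t : Diag G ar co m k}
    {q p : List A.Q} (h : A.Run (s.comp t) q p) : ∃ r, A.Run s q r ∧ A.Run t r p := by
  cases h with
  | comp h₁ h₂ => exact ⟨_, h₁, h₂⟩

theorem Run.pow {n : ℕ} {s : Diag G ar co n n} {q : List A.Q} (h : A.Run s q q) :
    ∀ a, A.Run (s.pow a) q q
  | 0 => .id h.length_eq.1
  | a + 1 => .comp h (h.pow a)

/-- A run along a chain; `ws` lists the state words reached after each factor, so its last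
entry is the target word. -/
inductive ChainRun (A : NDMA G ar co) :
    ∀ {n m : ℕ}, Chain G ar co n m → List A.Q → List (List A.Q) → List A.Q → Prop
  | nil {n : ℕ} {q : List A.Q} (h : q.length = n) : ChainRun A (.nil n) q [] q
  | cons {n m k : ℕ} {s : Diag G ar co n m} {c : Chain G ar co m k}
      {q r p : List A.Q} {ws : List (List A.Q)} :
      A.Run s q r → ChainRun A c r ws p → ChainRun A (.cons s c) q (r :: ws) p

theorem Run.exists_chainRun {n m : ℕ} {c : Chain G ar co n m} {q p : List A.Q}
    (h : A.Run c.comp q p) : ∃ ws, A.ChainRun c q ws p := by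
  induction c generalizing q with
  | nil n =>
    obtain rfl := h.eq_of_genFree trivial
    exact ⟨[], .nil h.length_eq.1⟩
  | cons s c ih =>
    obtain ⟨r, hs, hc⟩ := h.exists_of_comp
    obtain ⟨ws, hws⟩ := ih hc
    exact ⟨r :: ws, .cons hs hws⟩

namespace ChainRun

variable {n m : ℕ} {c : Chain G ar co n m} {q p : List A.Q} {ws : List (List A.Q)}

theorem run (h : A.ChainRun c q ws p) : A.Run c.comp q p := by
  induction h with
  | nil h => exact .id h
  | cons hs _ ih => exact .comp hs ih

theorem length_eq (h : A.ChainRun c q ws p) : ws.length = c.length := by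
  induction h with
  | nil _ => rfl
  | cons _ _ ih => simp [Chain.length, ih]

theorem length_le_of_widthsLe {k : ℕ} (h : A.ChainRun c q ws p) (hc : c.WidthsLe k) :
    ∀ w ∈ ws, w.length ≤ k := by
  induction h with
  | nil _ => simp
  | @cons _ _ _ _ c _ _ _ _ hs _ ih =>
    rintro w (_ | ⟨_, hw⟩)
    · exact hs.length_eq.2 ▸ c.source_le_of_widthsLe hc.2
    · exact ih hc.2 w hw

theorem split {ws₁ ws₂ : List (List A.Q)} {r : List A.Q}
    (h : A.ChainRun c q (ws₁ ++ r :: ws₂) p) :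
    ∃ (ℓ : ℕ) (c₁ : Chain G ar co n ℓ) (c₂ : Chain G ar co ℓ m),
      c = c₁.append c₂ ∧ c₁.length = ws₁.length + 1 ∧
      A.Run c₁.comp q r ∧ A.ChainRun c₂ r ws₂ p := by
  induction ws₁ generalizing n q c with
  | nil =>
    cases h with
    | @cons _ ℓ _ s c _ _ _ _ hs hc =>
      exact ⟨ℓ, .cons s (.nil ℓ), c, rfl, rfl, .comp hs (.id hs.length_eq.2), hc⟩
  | cons w ws₁ ih =>
    cases h with
    | @cons _ _ _ s c _ _ _ _ hs hc =>
      obtain ⟨ℓ, c₁, c₂, rfl, hlen, h₁, h₂⟩ := ih hc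
      exact ⟨ℓ, .cons s c₁, c₂, rfl, by simp [Chain.length, hlen], .comp hs h₁, h₂⟩

end ChainRun

end NDMA

theorem pumping_lemma_general (G : Type) (ar co : G → ℕ)
    (L : Set ((n : ℕ) × (m : ℕ) × Diag G ar co n m))
    (hreg : ∃ A : NDMA G ar co, L = A.language) :
    ∀ k : ℕ, 1 ≤ k → ∃ N : ℕ, ∀ {n m : ℕ} (c : Chain G ar co n m),
      (⟨n, m, c.comp⟩ : (n : ℕ) × (m : ℕ) × Diag G ar co n m) ∈ L →
      N ≤ c.length → c.AllNonId → c.WidthsLe k →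
      ∃ (ℓ : ℕ) (c₁ : Chain G ar co n ℓ) (c₂ : Chain G ar co ℓ ℓ) (c₃ : Chain G ar co ℓ m),
        c = c₁.append (c₂.append c₃) ∧ 1 ≤ c₁.length ∧ 1 ≤ c₂.length ∧
        ∀ a : ℕ,
          (⟨n, m, c₁.comp.comp ((c₂.comp.pow a).comp c₃.comp)⟩ :
            (n : ℕ) × (m : ℕ) × Diag G ar co n m) ∈ L := by
  obtain ⟨A, rfl⟩ := hreg
  intro k _
  have : Finite A.Q := A.finQ
  refine ⟨{w : List A.Q | w.length ≤ k}.ncard + 1, fun c hc hlen _ hw => ?_⟩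
  have hrun : A.Run c.comp A.init A.final := hc
  obtain ⟨ws, hws⟩ := hrun.exists_chainRun
  have hdup : ¬ ws.Nodup := fun hnd => by
    have := hnd.length_le_ncard (List.finite_length_le _ k) (hws.length_le_of_widthsLe hw)
    rw [hws.length_eq] at this
    omega
  obtain ⟨ws₁, r, ws₂, ws₃, rfl⟩ := List.exists_eq_append_cons_append_cons_of_not_nodup hdup
  obtain ⟨ℓ, c₁, c₂₃, rfl, hl₁, h₁, h₂₃⟩ := hws.split
  obtain ⟨ℓ', c₂, c₃, rfl, hl₂, h₂, h₃⟩ := h₂₃.split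
  obtain rfl : ℓ = ℓ' := h₂.length_eq.1.symm.trans h₂.length_eq.2
  exact ⟨ℓ, c₁, c₂, c₃, rfl, by omega, by omega, fun a => .comp h₁ (.comp (h₂.pow a) h₃.run)⟩

/-- Pumping lemma for regular monoidal languages. -/
theorem pumping_lemma (G : Type) (ar co : G → ℕ) [Finite G]
    (L : Set ((n : ℕ) × (m : ℕ) × Diag G ar co n m))
    (hreg : ∃ A : NDMA G ar co, L = A.language) :
    ∀ k : ℕ, 1 ≤ k → ∃ N : ℕ, ∀ {n m : ℕ} (c : Chain G ar co n m),
      (⟨n, m, c.comp⟩ : (n : ℕ) × (m : ℕ) × Diag G ar co n m) ∈ L →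
      N ≤ c.length → c.AllNonId → c.WidthsLe k →
      ∃ (ℓ : ℕ) (c₁ : Chain G ar co n ℓ) (c₂ : Chain G ar co ℓ ℓ) (c₃ : Chain G ar co ℓ m),
        c = c₁.append (c₂.append c₃) ∧ 1 ≤ c₁.length ∧ 1 ≤ c₂.length ∧
        ∀ a : ℕ,
          (⟨n, m, c₁.comp.comp ((c₂.comp.pow a).comp c₃.comp)⟩ :
            (n : ℕ) × (m : ℕ) × Diag G ar co n m) ∈ L :=
  pumping_lemma_general G ar co L hreg
end

section
/- Exchange is admissible in the theory of diagram contexts: if the sequent Γ, x:⟨A|B⟩, y:⟨C|D⟩, Δ ⊢ t is derivable, then so is Γ, y:⟨C|D⟩, x:⟨A|B⟩, Δ ⊢ t. Consequently the multicategory of derivable sequents is symmetric. -/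
/-- `Shuffle Γ Δ Ψ` : the list `Ψ` is a shuffling (order-preserving merge) of `Γ` and `Δ`. -/
inductive Shuffle {α : Type*} : List α → List α → List α → Prop
  | nil : Shuffle [] [] []
  | left {Γ Δ Ψ : List α} {a : α} : Shuffle Γ Δ Ψ → Shuffle (a :: Γ) Δ (a :: Ψ)
  | right {Γ Δ Ψ : List α} {a : α} : Shuffle Γ Δ Ψ → Shuffle Γ (a :: Δ) (a :: Ψ)

/-- Types of the theory of diagram contexts: pairs `⟨A|B⟩` of lists of sorts. -/
abbrev Ty (P : Polygraph) := List P.S × List P.S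

/-- Contexts: lists of named, typed holes. -/
abbrev Ctx (P : Polygraph) := List (ℕ × Ty P)

/-- Terms of the theory of diagram contexts over a polygraph. -/
inductive Tm (P : Polygraph) : Type
  | id (X : List P.S) : Tm P
  | gen (A B : List P.S) (f : P.Gen A B) : Tm P
  | hole (x : ℕ) (A B : List P.S) : Tm P
  | seq (t₁ t₂ : Tm P) : Tm P
  | par (t₁ t₂ : Tm P) : Tm P

/-- Derivability of sequents `Γ ⊢ t : ⟨A|B⟩` in the theory of diagram contexts:
rules Identity, Generator, Hole, Sequential and Parallel, the latter two mixing the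
contexts of the premises by an arbitrary shuffling. -/
inductive Der (P : Polygraph) : Ctx P → Tm P → Ty P → Prop
  | id (X : List P.S) : Der P [] (.id X) (X, X)
  | gen {A B : List P.S} (f : P.Gen A B) : Der P [] (.gen A B f) (A, B)
  | hole (x : ℕ) (A B : List P.S) : Der P [(x, (A, B))] (.hole x A B) (A, B)
  | seq {Γ Δ Ψ : Ctx P} {t₁ t₂ : Tm P} {A B C : List P.S} :
      Der P Γ t₁ (A, B) → Der P Δ t₂ (B, C) → Shuffle Γ Δ Ψ →
      Der P Ψ (.seq t₁ t₂) (A, C)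
  | par {Γ Δ Ψ : Ctx P} {t₁ t₂ : Tm P} {A₁ B₁ A₂ B₂ : List P.S} :
      Der P Γ t₁ (A₁, B₁) → Der P Δ t₂ (A₂, B₂) → Shuffle Γ Δ Ψ →
      Der P Ψ (.par t₁ t₂) (A₁ ++ A₂, B₁ ++ B₂)

lemma shuffle_perm {α : Type*} {Ψ Ψ' : List α} (hp : Ψ.Perm Ψ') :
    ∀ {Γ Δ : List α}, Shuffle Γ Δ Ψ →
      ∃ Γ' Δ', Γ.Perm Γ' ∧ Δ.Perm Δ' ∧ Shuffle Γ' Δ' Ψ' := by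
  induction hp with
  | nil => intro Γ Δ h; exact ⟨Γ, Δ, .refl _, .refl _, h⟩
  | cons a p ih =>
    intro Γ Δ h
    cases h with
    | left h =>
      obtain ⟨Γ', Δ', h1, h2, h3⟩ := ih h
      exact ⟨a :: Γ', Δ', h1.cons a, h2, h3.left⟩
    | right h =>
      obtain ⟨Γ', Δ', h1, h2, h3⟩ := ih h
      exact ⟨Γ', a :: Δ', h1, h2.cons a, h3.right⟩
  | swap a b l =>
    intro Γ Δ h
    cases h with
    | left h =>
      cases h with
      | left h => exact ⟨_, _, List.Perm.swap _ _ _, .refl _, h.left.left⟩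
      | right h => exact ⟨_, _, .refl _, .refl _, h.left.right⟩
    | right h =>
      cases h with
      | left h => exact ⟨_, _, .refl _, .refl _, h.right.left⟩
      | right h => exact ⟨_, _, .refl _, List.Perm.swap _ _ _, h.right.right⟩
  | trans p q ih1 ih2 =>
    intro Γ Δ h
    obtain ⟨Γ', Δ', h1, h2, h3⟩ := ih1 h
    obtain ⟨Γ'', Δ'', g1, g2, g3⟩ := ih2 h3
    exact ⟨Γ'', Δ'', h1.trans g1, h2.trans g2, g3⟩

lemma der_perm {P : Polygraph} {Γ Γ' : Ctx P} {t : Tm P} {T : Ty P}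
    (h : Der P Γ t T) (hp : Γ.Perm Γ') : Der P Γ' t T := by
  induction h generalizing Γ' with
  | id X => rw [← hp.nil_eq]; exact .id X
  | gen f => rw [← hp.nil_eq]; exact .gen f
  | hole x A B =>
    rw [← List.singleton_perm.mp hp]; exact .hole x A B
  | seq h1 h2 hs ih1 ih2 =>
    obtain ⟨Γ₁, Δ₁, p1, p2, s⟩ := shuffle_perm hp hs
    exact .seq (ih1 p1) (ih2 p2) s
  | par h1 h2 hs ih1 ih2 =>
    obtain ⟨Γ₁, Δ₁, p1, p2, s⟩ := shuffle_perm hp hs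
    exact .par (ih1 p1) (ih2 p2) s

/-- Exchange is admissible in the theory of diagram contexts: if
`Γ, x:⟨A|B⟩, y:⟨C|D⟩, Δ ⊢ t` is derivable then so is `Γ, y:⟨C|D⟩, x:⟨A|B⟩, Δ ⊢ t`.
Consequently the multicategory of derivable sequents is symmetric. -/
theorem exchange_admissible (P : Polygraph) (Γ Δ : Ctx P) (x y : ℕ)
    (A B C D : List P.S) (t : Tm P) (T : Ty P)
    (h : Der P (Γ ++ (x, (A, B)) :: (y, (C, D)) :: Δ) t T) :
    Der P (Γ ++ (y, (C, D)) :: (x, (A, B)) :: Δ) t T := by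
  exact der_perm h (List.Perm.append_left Γ (List.Perm.swap _ _ _))
end

section
/- Raw optics over a strict monoidal category C form a multicategory: the composition of raw optics defined by (f ∘ᵢ g) := (g₀, ..., gᵢ⨾(id⊗f₀⊗id), ..., id⊗fⱼ⊗id, ..., (id⊗fₙ⊗id)⨾g_{i+1}, ..., g_m) is associative and unital with identities (id_A, id_B). -/
open CategoryTheory

/-- A strict monoidal structure on a category whose objects form a monoid:
a tensor on morphisms that is functorial and strictly associative and unital. -/
class SMC (C : Type u) [Category.{v} C] [Monoid C] where
  tens : ∀ {W X Y Z : C}, (W ⟶ X) → (Y ⟶ Z) → (W * Y ⟶ X * Z)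
  tens_id : ∀ (X Y : C), tens (𝟙 X) (𝟙 Y) = 𝟙 (X * Y)
  tens_comp : ∀ {X₁ X₂ X₃ Y₁ Y₂ Y₃ : C} (f₁ : X₁ ⟶ X₂) (f₂ : X₂ ⟶ X₃)
      (g₁ : Y₁ ⟶ Y₂) (g₂ : Y₂ ⟶ Y₃),
      tens (f₁ ≫ f₂) (g₁ ≫ g₂) = tens f₁ g₁ ≫ tens f₂ g₂
  tens_assoc : ∀ {X X' Y Y' Z Z' : C} (f : X ⟶ X') (g : Y ⟶ Y') (h : Z ⟶ Z'),
      tens (tens f g) h =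
        eqToHom (mul_assoc X Y Z) ≫ tens f (tens g h) ≫ eqToHom (mul_assoc X' Y' Z').symm
  tens_one_left : ∀ {X Y : C} (f : X ⟶ Y),
      tens (𝟙 (1 : C)) f = eqToHom (one_mul X) ≫ f ≫ eqToHom (one_mul Y).symm
  tens_one_right : ∀ {X Y : C} (f : X ⟶ Y),
      tens f (𝟙 (1 : C)) = eqToHom (mul_one X) ≫ f ≫ eqToHom (mul_one Y).symm

/-- A raw optic over a strict monoidal category `C`, from the list of pairs `l` to the
pair `⟨X|T⟩`: a tuple of morphisms `f₀ : X ⟶ M₁*A₁*N₁`,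
`fᵢ : Mᵢ*Bᵢ*Nᵢ ⟶ Mᵢ₊₁*Aᵢ₊₁*Nᵢ₊₁`, `fₙ : Mₙ*Bₙ*Nₙ ⟶ T` for a choice of middle objects
`Mᵢ`, `Nᵢ`.  A nullary raw optic is a single morphism `X ⟶ T`. -/
inductive RawT (C : Type u) [Category.{v} C] [Monoid C] [SMC C] :
    C → List (C × C) → C → Type (max u v)
  | nil {X T : C} (f : X ⟶ T) : RawT C X [] T
  | cons {X T A B : C} {l : List (C × C)} (M N : C) (f : X ⟶ M * A * N)
      (rest : RawT C (M * B * N) l T) : RawT C X ((A, B) :: l) T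

namespace RawT

variable {C : Type u} [Category.{v} C] [Monoid C] [SMC C]

def castL {X T : C} {l l' : List (C × C)} (h : l = l') (r : RawT C X l T) :
    RawT C X l' T := by subst h; exact r

def castSrc {X X' T : C} {l : List (C × C)} (h : X = X') (r : RawT C X l T) :
    RawT C X' l T := by subst h; exact r

/-- Whiskering a raw optic on both sides by objects `M`, `N`. -/
def whisk (M N : C) : ∀ {X T : C} {l : List (C × C)},
    RawT C X l T → RawT C (M * X * N) l (M * T * N)
  | _, _, _, .nil f => .nil (SMC.tens (SMC.tens (𝟙 M) f) (𝟙 N))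
  | _, _, _, .cons (A := A) (B := B) M' N' f rest =>
      .cons (M * M') (N' * N)
        (SMC.tens (SMC.tens (𝟙 M) f) (𝟙 N) ≫ eqToHom (by simp [mul_assoc]))
        ((whisk M N rest).castSrc (by simp [mul_assoc]))

/-- Precompose a raw optic with a morphism. -/
def precomp {W X T : C} {l : List (C × C)} (e : W ⟶ X) :
    RawT C X l T → RawT C W l T
  | .nil f => .nil (e ≫ f)
  | .cons M N f rest => .cons M N (e ≫ f) rest

/-- Concatenation of raw optics. -/
def append : ∀ {X T U : C} {l l' : List (C × C)},
    RawT C X l T → RawT C T l' U → RawT C X (l ++ l') U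
  | _, _, _, _, _, .nil f, s => s.precomp f
  | _, _, _, _, _, .cons M N f rest, s => .cons M N f (rest.append s)

/-- Composition of raw optics: substitution of a raw optic `G` into the hole of `F`
in position `l₁.length`, whiskering the components of `G` by the middle objects. -/
def subst : ∀ (l₁ : List (C × C)) {l₂ : List (C × C)} {X T A B : C} {l' : List (C × C)},
    RawT C X (l₁ ++ (A, B) :: l₂) T → RawT C A l' B → RawT C X (l₁ ++ l' ++ l₂) T
  | [], _, _, _, _, _, _, F, G =>
      match F with
      | .cons M N f rest => ((whisk M N G).append rest).precomp f
  | _ :: l₁, _, _, _, _, _, _, F, G =>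
      match F with
      | .cons M N f rest => .cons M N f (subst l₁ rest G)

/-- The identity raw optic on `⟨A|B⟩`. -/
def idRaw (A B : C) : RawT C A [(A, B)] B :=
  .cons 1 1 (eqToHom (by simp)) (.nil (eqToHom (by simp)))

end RawT

section Aux

variable {C : Type u} [Category.{v} C] [Monoid C] [SMC C]

attribute [simp] SMC.tens_id

@[simp] theorem tens_eqToHom {X X' Y Y' : C} (h : X = X') (h' : Y = Y') :
    SMC.tens (eqToHom h) (eqToHom h') = eqToHom (by rw [h, h']) := by
  subst h; subst h'; simp

theorem tens_comp_left {X Y₁ Y₂ Y₃ : C} (g₁ : Y₁ ⟶ Y₂) (g₂ : Y₂ ⟶ Y₃) :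
    SMC.tens (𝟙 X) (g₁ ≫ g₂) = SMC.tens (𝟙 X) g₁ ≫ SMC.tens (𝟙 X) g₂ := by
  rw [← SMC.tens_comp]; simp

theorem tens_comp_right {X Y₁ Y₂ Y₃ : C} (g₁ : Y₁ ⟶ Y₂) (g₂ : Y₂ ⟶ Y₃) :
    SMC.tens (g₁ ≫ g₂) (𝟙 X) = SMC.tens g₁ (𝟙 X) ≫ SMC.tens g₂ (𝟙 X) := by
  rw [← SMC.tens_comp]; simp

namespace RawT

@[simp] theorem castL_rfl {X T : C} {l : List (C × C)} (h : l = l) (r : RawT C X l T) :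
    castL h r = r := rfl

@[simp] theorem castSrc_rfl {X T : C} {l : List (C × C)} (h : X = X) (r : RawT C X l T) :
    castSrc h r = r := rfl

theorem castL_heq {X T : C} {l l' : List (C × C)} (h : l = l') (r : RawT C X l T) :
    HEq (castL h r) r := by subst h; rfl

theorem castSrc_heq {X X' T : C} {l : List (C × C)} (h : X = X') (r : RawT C X l T) :
    HEq (castSrc h r) r := by subst h; rfl

/-- Post-composition with a morphism. -/
def postcomp : ∀ {X T U : C} {l : List (C × C)}, RawT C X l T → (T ⟶ U) → RawT C X l U
  | _, _, _, _, .nil f, e => .nil (f ≫ e)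
  | _, _, _, _, .cons M N f rest, e => .cons M N f (rest.postcomp e)

@[simp] theorem precomp_nil {X T W : C} (e : W ⟶ X) (f : X ⟶ T) :
    (nil (C := C) f).precomp e = nil (e ≫ f) := rfl

@[simp] theorem precomp_cons {W X T A B M N : C} {l : List (C × C)} (e : W ⟶ X)
    (f : X ⟶ M * A * N) (rest : RawT C (M * B * N) l T) :
    (cons M N f rest).precomp e = cons M N (e ≫ f) rest := rfl

@[simp] theorem precomp_id {X T : C} {l : List (C × C)} (r : RawT C X l T) :
    r.precomp (𝟙 X) = r := by cases r <;> simp [precomp]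

@[simp] theorem precomp_precomp {V W X T : C} {l : List (C × C)} (e : V ⟶ W) (e' : W ⟶ X)
    (r : RawT C X l T) : (r.precomp e').precomp e = r.precomp (e ≫ e') := by
  cases r <;> simp [precomp]

theorem castSrc_eq_precomp {X X' T : C} {l : List (C × C)} (h : X = X') (r : RawT C X l T) :
    castSrc h r = r.precomp (eqToHom h.symm) := by subst h; simp

@[simp] theorem postcomp_id {X T : C} {l : List (C × C)} (r : RawT C X l T) :
    r.postcomp (𝟙 T) = r := by
  induction r with
  | nil f => simp [postcomp]
  | cons M N f rest ih => simp [postcomp, ih]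

@[simp] theorem precomp_postcomp {W X T U : C} {l : List (C × C)} (e : W ⟶ X) (e' : T ⟶ U)
    (r : RawT C X l T) : (r.postcomp e').precomp e = (r.precomp e).postcomp e' := by
  cases r <;> simp [postcomp, precomp]

@[simp] theorem append_nil_left {X T U : C} {l : List (C × C)} (f : X ⟶ T)
    (s : RawT C T l U) : (nil f).append s = s.precomp f := rfl

@[simp] theorem append_cons {X T U A B M N : C} {l l' : List (C × C)} (f : X ⟶ M * A * N)
    (rest : RawT C (M * B * N) l T) (s : RawT C T l' U) :
    (cons M N f rest).append s = cons M N f (rest.append s) := rfl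

@[simp] theorem precomp_append {W X T U : C} {l l' : List (C × C)} (e : W ⟶ X)
    (r : RawT C X l T) (s : RawT C T l' U) :
    (r.precomp e).append s = (r.append s).precomp e := by
  cases r
  · cases s <;> simp [append, precomp]
  · simp [append, precomp]

@[simp] theorem append_precomp {X T T' U : C} {l l' : List (C × C)} (e : T ⟶ T')
    (r : RawT C X l T) (s : RawT C T' l' U) :
    r.append (s.precomp e) = (r.postcomp e).append s := by
  induction r with
  | nil f => simp [append, postcomp]
  | cons M N f rest ih => simp [append, postcomp, ih]

end RawT

namespace RawT

@[simp] theorem tens_id_eqToHom_left {M X Y : C} (h : X = Y) :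
    SMC.tens (𝟙 M) (eqToHom h) = eqToHom (by rw [h]) := by subst h; simp

@[simp] theorem tens_id_eqToHom_right {N X Y : C} (h : X = Y) :
    SMC.tens (eqToHom h) (𝟙 N) = eqToHom (by rw [h]) := by subst h; simp

theorem heq_nil {X X' T T' : C} (hX : X = X') (hT : T = T') {f : X ⟶ T} {f' : X' ⟶ T'}
    (hf : HEq f f') : HEq (nil (C := C) f) (nil f') := by
  subst hX; subst hT; rw [eq_of_heq hf]

theorem heq_cons {X X' T T' A B : C} {l l' : List (C × C)} {M M' N N' : C}
    (hl : l = l') (hX : X = X') (hT : T = T') (hM : M = M') (hN : N = N')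
    {f : X ⟶ M * A * N} {f' : X' ⟶ M' * A * N'} (hf : HEq f f')
    {rest : RawT C (M * B * N) l T} {rest' : RawT C (M' * B * N') l' T'}
    (hr : HEq rest rest') :
    HEq (cons M N f rest) (cons M' N' f' rest') := by
  subst hl; subst hX; subst hT; subst hM; subst hN
  rw [eq_of_heq hf, eq_of_heq hr]

theorem precomp_congr {W X X' T T' : C} {l l' : List (C × C)} (hl : l = l') (hX : X = X')
    (hT : T = T') {e : W ⟶ X} {e' : W ⟶ X'} (he : HEq e e')
    {r : RawT C X l T} {r' : RawT C X' l' T'} (hr : HEq r r') :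
    HEq (r.precomp e) (r'.precomp e') := by
  subst hl; subst hX; subst hT; rw [eq_of_heq he, eq_of_heq hr]

theorem append_congr {X X' T T' U U' : C} {l l₀ m m₀ : List (C × C)}
    (hl : l = l₀) (hm : m = m₀) (hX : X = X') (hT : T = T') (hU : U = U')
    {r : RawT C X l T} {r' : RawT C X' l₀ T'} (hr : HEq r r')
    {s : RawT C T m U} {s' : RawT C T' m₀ U'} (hs : HEq s s') :
    HEq (r.append s) (r'.append s') := by
  subst hl; subst hm; subst hX; subst hT; subst hU; rw [eq_of_heq hr, eq_of_heq hs]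

theorem subst_congr (l₁ : List (C × C)) {l₂ l' : List (C × C)} {X X' T T' A B : C}
    (hX : X = X') (hT : T = T')
    {F : RawT C X (l₁ ++ (A, B) :: l₂) T} {F' : RawT C X' (l₁ ++ (A, B) :: l₂) T'}
    (hF : HEq F F') {G : RawT C A l' B} :
    HEq (subst l₁ F G) (subst l₁ F' G) := by
  subst hX; subst hT; rw [eq_of_heq hF]

theorem precomp_eqToHom_heq {W X T : C} {l : List (C × C)} (h : W = X) (r : RawT C X l T) :
    HEq (r.precomp (eqToHom h)) r := by subst h; simp

theorem postcomp_eqToHom_heq {X T U : C} {l : List (C × C)} (h : T = U) (r : RawT C X l T) :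
    HEq (r.postcomp (eqToHom h)) r := by subst h; simp

theorem castL_precomp {W X T : C} {l l' : List (C × C)} (h : l = l') (e : W ⟶ X)
    (r : RawT C X l T) : castL h (r.precomp e) = (castL h r).precomp e := by subst h; rfl

theorem castL_cons {X T A B M N : C} {l l' : List (C × C)}
    (h : ((A, B) :: l : List (C × C)) = (A, B) :: l') (h' : l = l')
    (f : X ⟶ M * A * N) (rest : RawT C (M * B * N) l T) :
    castL h (cons M N f rest) = cons M N f (castL h' rest) := by subst h'; rfl

@[simp] theorem whisk_nil (M N : C) {X T : C} (f : X ⟶ T) :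
    whisk M N (nil (C := C) f) = nil (SMC.tens (SMC.tens (𝟙 M) f) (𝟙 N)) := rfl

@[simp] theorem whisk_cons (M N : C) {X T A B M' N' : C} {l : List (C × C)}
    (f : X ⟶ M' * A * N') (rest : RawT C (M' * B * N') l T) :
    whisk M N (cons M' N' f rest) =
      cons (M * M') (N' * N)
        (SMC.tens (SMC.tens (𝟙 M) f) (𝟙 N) ≫ eqToHom (by simp [mul_assoc]))
        ((whisk M N rest).castSrc (by simp [mul_assoc])) := rfl

@[simp] theorem subst_nil_cons {X T A B M N : C} {l₂ l' : List (C × C)}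
    (f : X ⟶ M * A * N) (rest : RawT C (M * B * N) l₂ T) (G : RawT C A l' B) :
    subst [] (cons M N f rest) G = ((whisk M N G).append rest).precomp f := rfl

@[simp] theorem subst_cons_cons {X T A B A' B' M N : C} {l₁ l₂ l' : List (C × C)}
    (f : X ⟶ M * A * N) (rest : RawT C (M * B * N) (l₁ ++ (A', B') :: l₂) T)
    (G : RawT C A' l' B') :
    subst ((A, B) :: l₁) (cons M N f rest) G = cons M N f (subst l₁ rest G) := rfl

theorem tens_whisker_comp {M N X Y Z : C} (e : X ⟶ Y) (f : Y ⟶ Z) :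
    SMC.tens (SMC.tens (𝟙 M) (e ≫ f)) (𝟙 N) =
      SMC.tens (SMC.tens (𝟙 M) e) (𝟙 N) ≫ SMC.tens (SMC.tens (𝟙 M) f) (𝟙 N) := by
  rw [tens_comp_left, tens_comp_right]

theorem whisk_precomp (M N : C) {W X T : C} {l : List (C × C)} (e : W ⟶ X)
    (r : RawT C X l T) :
    whisk M N (r.precomp e) = (whisk M N r).precomp (SMC.tens (SMC.tens (𝟙 M) e) (𝟙 N)) := by
  cases r <;> simp [precomp, tens_whisker_comp, Category.assoc]

@[simp] theorem postcomp_castSrc {X X' T U : C} {l : List (C × C)} (h : X = X')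
    (e : T ⟶ U) (r : RawT C X l T) :
    (r.castSrc h).postcomp e = (r.postcomp e).castSrc h := by subst h; rfl

theorem whisk_postcomp (M N : C) {X T U : C} {l : List (C × C)} (e : T ⟶ U)
    (r : RawT C X l T) :
    whisk M N (r.postcomp e) = (whisk M N r).postcomp (SMC.tens (SMC.tens (𝟙 M) e) (𝟙 N)) := by
  induction r with
  | nil f => simp [postcomp, tens_whisker_comp]
  | cons M' N' f rest ih => simp [postcomp, ih]

theorem whisk_append (M N : C) {X T U : C} {l l' : List (C × C)}
    (r : RawT C X l T) (s : RawT C T l' U) :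
    whisk M N (r.append s) = (whisk M N r).append (whisk M N s) := by
  induction r with
  | nil f => simp [append, whisk_precomp]
  | cons M' N' f rest ih =>
      simp only [append, whisk_cons, append_cons]
      congr 1
      rw [castSrc_eq_precomp, castSrc_eq_precomp, ih, precomp_append]

end RawT

namespace RawT

theorem tens_heq {X X' Y Y' Z Z' W W' : C} (h1 : X = X') (h2 : Y = Y') (h3 : Z = Z')
    (h4 : W = W') {f : X ⟶ Y} {f' : X' ⟶ Y'} (hf : HEq f f')
    {g : Z ⟶ W} {g' : Z' ⟶ W'} (hg : HEq g g') :
    HEq (SMC.tens f g) (SMC.tens f' g') := by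
  subst h1; subst h2; subst h3; subst h4
  rw [eq_of_heq hf, eq_of_heq hg]

theorem tens_assoc_heq {X X' Y Y' Z Z' : C} (f : X ⟶ X') (g : Y ⟶ Y') (h : Z ⟶ Z') :
    HEq (SMC.tens (SMC.tens f g) h) (SMC.tens f (SMC.tens g h)) :=
  (conj_eqToHom_iff_heq _ _ (mul_assoc _ _ _) (mul_assoc _ _ _)).mp (SMC.tens_assoc f g h)

theorem tens_whisk_assoc {M N M' N' X Y : C} (f : X ⟶ Y) :
    HEq (SMC.tens (SMC.tens (𝟙 M) (SMC.tens (SMC.tens (𝟙 M') f) (𝟙 N'))) (𝟙 N))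
        (SMC.tens (SMC.tens (𝟙 (M * M')) f) (𝟙 (N' * N))) := by
  have e1 : HEq (SMC.tens (𝟙 M) (SMC.tens (SMC.tens (𝟙 M') f) (𝟙 N')))
      (SMC.tens (SMC.tens (𝟙 M) (SMC.tens (𝟙 M') f)) (𝟙 N')) :=
    (tens_assoc_heq (𝟙 M) (SMC.tens (𝟙 M') f) (𝟙 N')).symm
  have e2 : HEq (SMC.tens (𝟙 M) (SMC.tens (𝟙 M') f)) (SMC.tens (𝟙 (M * M')) f) := by
    have h := (tens_assoc_heq (𝟙 M) (𝟙 M') f).symm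
    rwa [SMC.tens_id] at h
  have e3 : HEq (SMC.tens (𝟙 M) (SMC.tens (SMC.tens (𝟙 M') f) (𝟙 N')))
      (SMC.tens (SMC.tens (𝟙 (M * M')) f) (𝟙 N')) :=
    e1.trans (tens_heq (by simp [mul_assoc]) (by simp [mul_assoc]) rfl rfl e2 HEq.rfl)
  have e4 : HEq (SMC.tens (SMC.tens (𝟙 M) (SMC.tens (SMC.tens (𝟙 M') f) (𝟙 N'))) (𝟙 N))
      (SMC.tens (SMC.tens (SMC.tens (𝟙 (M * M')) f) (𝟙 N')) (𝟙 N)) :=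
    tens_heq (by simp [mul_assoc]) (by simp [mul_assoc]) rfl rfl e3 HEq.rfl
  have e5 : HEq (SMC.tens (SMC.tens (SMC.tens (𝟙 (M * M')) f) (𝟙 N')) (𝟙 N))
      (SMC.tens (SMC.tens (𝟙 (M * M')) f) (𝟙 (N' * N))) := by
    have h := tens_assoc_heq (SMC.tens (𝟙 (M * M')) f) (𝟙 N') (𝟙 N)
    rwa [SMC.tens_id] at h
  exact e4.trans e5

theorem whisk_congr (M N : C) {X X' T T' : C} {l : List (C × C)}
    (hX : X = X') (hT : T = T') {r : RawT C X l T} {r' : RawT C X' l T'}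
    (hr : HEq r r') : HEq (whisk M N r) (whisk M N r') := by
  subst hX; subst hT; rw [eq_of_heq hr]

theorem whisk_whisk (M N M' N' : C) {X T : C} {l : List (C × C)} (r : RawT C X l T) :
    HEq (whisk M N (whisk M' N' r)) (whisk (M * M') (N' * N) r) := by
  induction r with
  | nil f => exact heq_nil (by simp [mul_assoc]) (by simp [mul_assoc]) (tens_whisk_assoc f)
  | cons K L f rest ih =>
      rw [whisk_cons, whisk_cons, whisk_cons]
      refine heq_cons rfl ?_ ?_ ?_ ?_ ?_ ?_
      · simp [mul_assoc]
      · simp [mul_assoc]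
      · simp [mul_assoc]
      · simp [mul_assoc]
      · simp only [tens_comp_left, tens_comp_right, tens_id_eqToHom_left,
          tens_id_eqToHom_right, Category.assoc, eqToHom_trans]
        refine HEq.trans (comp_eqToHom_heq _ _) ?_
        exact HEq.trans (tens_whisk_assoc f) (comp_eqToHom_heq _ _).symm
      · refine HEq.trans (castSrc_heq _ _) (HEq.trans ?_ (castSrc_heq _ _).symm)
        exact HEq.trans (whisk_congr M N (by simp [mul_assoc]) rfl (castSrc_heq _ _)) ih

theorem whisk_one {X T : C} {l : List (C × C)} (r : RawT C X l T) :
    HEq (whisk (1 : C) 1 r) r := by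
  induction r with
  | nil f =>
      refine heq_nil (by simp) (by simp) ?_
      refine (conj_eqToHom_iff_heq _ _ ?_ ?_).mp ?_ <;>
        simp [SMC.tens_one_left, SMC.tens_one_right]
  | cons M' N' f rest ih =>
      rw [whisk_cons]
      refine heq_cons rfl ?_ ?_ ?_ ?_ ?_ ?_
      · simp
      · simp
      · simp
      · simp
      · refine (conj_eqToHom_iff_heq _ _ ?_ ?_).mp ?_ <;>
          simp [SMC.tens_one_left, SMC.tens_one_right]
      · exact HEq.trans (castSrc_heq _ _) ih

theorem append_assoc_heq {X T U V : C} {la lb lc : List (C × C)}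
    (a : RawT C X la T) (b : RawT C T lb U) (c : RawT C U lc V) :
    HEq ((a.append b).append c) (a.append (b.append c)) := by
  induction a with
  | nil f => exact heq_of_eq (by simp)
  | cons M N f rest ih =>
      simp only [append_cons]
      refine heq_cons (by simp) rfl rfl rfl rfl HEq.rfl ?_
      exact ih _

theorem append_nil_right_heq {X T U : C} {l : List (C × C)} (r : RawT C X l T) (e : T ⟶ U) :
    HEq (r.append (nil e)) (r.postcomp e) := by
  induction r with
  | nil f => exact heq_of_eq rfl
  | cons M N f rest ih =>
      simp only [append_cons, postcomp]
      refine heq_cons (by simp) rfl rfl rfl rfl HEq.rfl ?_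
      exact ih _

theorem subst_precomp (m : List (C × C)) {l₂ l' : List (C × C)} {W X T A B : C}
    (e : W ⟶ X) (s : RawT C X (m ++ (A, B) :: l₂) T) (H : RawT C A l' B) :
    subst m (s.precomp e) H = (subst m s H).precomp e := by
  cases m with
  | nil => cases s with | cons M N f rest => simp
  | cons p m => obtain ⟨a, b⟩ := p; cases s with | cons M N f rest => simp

theorem subst_append_left :
    ∀ (m₁ : List (C × C)) {m₂ l₂ l' : List (C × C)} {X T U A B : C}
      (r : RawT C X (m₁ ++ (A, B) :: m₂) T) (s : RawT C T l₂ U) (H : RawT C A l' B)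
      (h : (m₁ ++ (A, B) :: m₂) ++ l₂ = m₁ ++ (A, B) :: (m₂ ++ l₂)),
      HEq (subst m₁ ((r.append s).castL h) H) ((subst m₁ r H).append s)
  | [], m₂, l₂, l', X, T, U, A, B, .cons M N f r', s, H, h => by
      simp only [append_cons, castL_rfl, subst_nil_cons, precomp_append]
      exact precomp_congr (by simp) rfl rfl (HEq.refl f) (append_assoc_heq (whisk M N H) r' s).symm
  | (a, b) :: m₁, m₂, l₂, l', X, T, U, A, B, .cons M N f r', s, H, h => by
      have h' : (m₁ ++ (A, B) :: m₂) ++ l₂ = m₁ ++ (A, B) :: (m₂ ++ l₂) := by simp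
      rw [append_cons, castL_cons h h', subst_cons_cons, subst_cons_cons, append_cons]
      refine heq_cons (by simp) rfl rfl rfl rfl HEq.rfl ?_
      exact subst_append_left m₁ r' s H h'

theorem subst_append_right :
    ∀ {la : List (C × C)} (m : List (C × C)) {m₂ l' : List (C × C)} {X T U A B : C}
      (r : RawT C X la T) (s : RawT C T (m ++ (A, B) :: m₂) U) (H : RawT C A l' B)
      (h : la ++ (m ++ (A, B) :: m₂) = (la ++ m) ++ (A, B) :: m₂),
      HEq (subst (la ++ m) ((r.append s).castL h) H) (r.append (subst m s H))
  | [], m, m₂, l', X, T, U, A, B, .nil f, s, H, h => by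
      simp only [append_nil_left, castL_rfl, List.nil_append]
      rw [subst_precomp]
  | (a, b) :: la, m, m₂, l', X, T, U, A, B, .cons M N f r', s, H, h => by
      have h' : la ++ (m ++ (A, B) :: m₂) = (la ++ m) ++ (A, B) :: m₂ := by simp
      rw [append_cons, castL_cons h h']
      show HEq (subst ((a, b) :: (la ++ m)) (cons M N f ((r'.append s).castL h')) H)
        ((cons M N f r').append (subst m s H))
      rw [subst_cons_cons, append_cons]
      refine heq_cons (by simp) rfl rfl rfl rfl HEq.rfl ?_
      exact subst_append_right m r' s H h'

theorem whisk_subst (M N : C) :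
    ∀ (m₁ : List (C × C)) {m₂ l' : List (C × C)} {X T A B : C}
      (G : RawT C X (m₁ ++ (A, B) :: m₂) T) (H : RawT C A l' B),
      HEq (whisk M N (subst m₁ G H)) (subst m₁ (whisk M N G) H)
  | [], m₂, l', X, T, A, B, .cons K L g G', H => by
      rw [subst_nil_cons, whisk_precomp, whisk_append, whisk_cons, subst_nil_cons]
      refine precomp_congr rfl ?_ rfl (comp_eqToHom_heq _ _).symm ?_
      · simp [mul_assoc]
      · refine append_congr rfl rfl ?_ ?_ rfl (whisk_whisk M N K L H) (castSrc_heq _ _).symm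
        · simp [mul_assoc]
        · simp [mul_assoc]
  | (a, b) :: m₁, m₂, l', X, T, A, B, .cons K L g G', H => by
      rw [subst_cons_cons, whisk_cons, whisk_cons, subst_cons_cons]
      refine heq_cons (by simp) rfl rfl rfl rfl HEq.rfl ?_
      refine HEq.trans (castSrc_heq _ _) (HEq.trans (whisk_subst M N m₁ G' H) ?_)
      exact subst_congr m₁ (by simp [mul_assoc]) rfl (castSrc_heq _ _).symm

theorem subst_idRaw :
    ∀ (l₁ : List (C × C)) {l₂ : List (C × C)} {X T A B : C}
      (F : RawT C X (l₁ ++ (A, B) :: l₂) T),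
      HEq (subst l₁ F (idRaw A B)) F
  | [], l₂, X, T, A, B, .cons M N f rest => by
      rw [subst_nil_cons, idRaw, whisk_cons, whisk_nil, castSrc_eq_precomp,
        precomp_nil, append_cons, append_nil_left, precomp_cons]
      refine heq_cons rfl rfl rfl ?_ ?_ ?_ ?_
      · simp
      · simp
      · refine (conj_eqToHom_iff_heq _ _ ?_ ?_).mp ?_ <;> simp
      · simp only [tens_id_eqToHom_left, tens_id_eqToHom_right, eqToHom_trans]
        exact precomp_eqToHom_heq _ _
  | (a, b) :: l₁, l₂, X, T, A, B, .cons M N f rest => by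
      rw [subst_cons_cons]
      refine heq_cons (by simp) rfl rfl rfl rfl HEq.rfl ?_
      exact subst_idRaw l₁ rest

end RawT

namespace RawT

theorem nested_assoc :
    ∀ (l₁ : List (C × C)) {l₂ m₁ m₂ lh : List (C × C)} {X T A B A' B' : C}
      (F : RawT C X (l₁ ++ (A, B) :: l₂) T) (G : RawT C A (m₁ ++ (A', B') :: m₂) B)
      (H : RawT C A' lh B')
      (hc : l₁ ++ (m₁ ++ (A', B') :: m₂) ++ l₂ = (l₁ ++ m₁) ++ (A', B') :: (m₂ ++ l₂)),
      HEq (subst l₁ F (subst m₁ G H)) (subst (l₁ ++ m₁) ((subst l₁ F G).castL hc) H)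
  | [], l₂, m₁, m₂, lh, X, T, A, B, A', B', .cons M N f F', G, H, hc => by
      rw [subst_nil_cons, subst_nil_cons, castL_precomp]
      show HEq (((whisk M N (subst m₁ G H)).append F').precomp f)
        (subst m₁ ((((whisk M N G).append F').castL hc).precomp f) H)
      rw [subst_precomp]
      refine precomp_congr (by simp) rfl rfl (HEq.refl f) ?_
      refine HEq.trans
        (append_congr rfl rfl rfl rfl rfl (whisk_subst M N m₁ G H) (HEq.refl F')) ?_
      exact (subst_append_left m₁ (whisk M N G) F' H hc).symm
  | (a, b) :: l₁, l₂, m₁, m₂, lh, X, T, A, B, A', B', .cons M N f F', G, H, hc => by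
      have hc' : l₁ ++ (m₁ ++ (A', B') :: m₂) ++ l₂ = (l₁ ++ m₁) ++ (A', B') :: (m₂ ++ l₂) := by
        simp
      rw [subst_cons_cons, subst_cons_cons, castL_cons hc hc']
      show HEq (cons M N f (subst l₁ F' (subst m₁ G H)))
        (subst ((a, b) :: (l₁ ++ m₁)) (cons M N f ((subst l₁ F' G).castL hc')) H)
      rw [subst_cons_cons]
      refine heq_cons (by simp) rfl rfl rfl rfl (HEq.refl f) ?_
      exact nested_assoc l₁ F' G H hc'

theorem parallel_assoc :
    ∀ (l₁ : List (C × C)) {l₂ l₃ lg lh : List (C × C)} {X T A B A' B' : C}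
      (F : RawT C X (l₁ ++ (A, B) :: (l₂ ++ (A', B') :: l₃)) T) (G : RawT C A lg B)
      (H : RawT C A' lh B')
      (hc1 : l₁ ++ lg ++ (l₂ ++ (A', B') :: l₃) = (l₁ ++ lg ++ l₂) ++ (A', B') :: l₃)
      (hc2 : l₁ ++ (A, B) :: (l₂ ++ (A', B') :: l₃) = (l₁ ++ (A, B) :: l₂) ++ (A', B') :: l₃)
      (hc3 : (l₁ ++ (A, B) :: l₂) ++ lh ++ l₃ = l₁ ++ (A, B) :: (l₂ ++ lh ++ l₃)),
      HEq (subst (l₁ ++ lg ++ l₂) ((subst l₁ F G).castL hc1) H)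
        (subst l₁ ((subst (l₁ ++ (A, B) :: l₂) (F.castL hc2) H).castL hc3) G)
  | [], l₂, l₃, lg, lh, X, T, A, B, A', B', .cons M N f F₂, G, H, hc1, hc2, hc3 => by
      rw [subst_nil_cons, castL_precomp]
      show HEq (subst (lg ++ l₂) ((((whisk M N G).append F₂).castL hc1).precomp f) H)
        (subst [] ((subst ((A, B) :: l₂) ((cons M N f F₂).castL hc2) H).castL hc3) G)
      rw [subst_precomp, castL_rfl, castL_rfl, subst_cons_cons, subst_nil_cons]
      exact precomp_congr (by simp) rfl rfl (HEq.refl f)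
        (subst_append_right l₂ (whisk M N G) F₂ H hc1)
  | (a, b) :: l₁, l₂, l₃, lg, lh, X, T, A, B, A', B', .cons M N f F', G, H, hc1, hc2, hc3 => by
      have hc1' : l₁ ++ lg ++ (l₂ ++ (A', B') :: l₃) = (l₁ ++ lg ++ l₂) ++ (A', B') :: l₃ := by
        simp
      have hc2' : l₁ ++ (A, B) :: (l₂ ++ (A', B') :: l₃) =
          (l₁ ++ (A, B) :: l₂) ++ (A', B') :: l₃ := by simp
      have hc3' : (l₁ ++ (A, B) :: l₂) ++ lh ++ l₃ = l₁ ++ (A, B) :: (l₂ ++ lh ++ l₃) := by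
        simp
      rw [subst_cons_cons, castL_cons hc1 hc1']
      show HEq (subst ((a, b) :: (l₁ ++ lg ++ l₂)) (cons M N f ((subst l₁ F' G).castL hc1')) H)
        (subst ((a, b) :: l₁)
          ((subst ((a, b) :: (l₁ ++ (A, B) :: l₂)) ((cons M N f F').castL hc2) H).castL hc3) G)
      rw [subst_cons_cons, castL_cons hc2 hc2']
      rw [subst_cons_cons, castL_cons hc3 hc3', subst_cons_cons]
      refine heq_cons (by simp) rfl rfl rfl rfl (HEq.refl f) ?_
      exact parallel_assoc l₁ F' G H hc1' hc2' hc3'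

end RawT

end Aux



open RawT in
/-- Raw optics over a strict monoidal category form a multicategory: the substitution
of raw optics is unital with identities `(𝟙 A, 𝟙 B)` and associative, both in the
nested and in the parallel case. -/
theorem rawOptics_multicategory (C : Type u) [Category.{v} C] [Monoid C] [SMC C] :
    -- right unit law: substituting an identity raw optic into any hole is the identity
    (∀ {X T A B : C} (l₁ l₂ : List (C × C)) (F : RawT C X (l₁ ++ (A, B) :: l₂) T),
      subst l₁ F (idRaw A B) = F.castL (by simp)) ∧
    -- left unit law: substituting into the identity raw optic gives back the optic
    (∀ {A B : C} {l' : List (C × C)} (G : RawT C A l' B),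
      HEq (subst [] (idRaw A B) G) G) ∧
    -- nested associativity
    (∀ {X T A B A' B' : C} (l₁ l₂ m₁ m₂ h : List (C × C))
      (F : RawT C X (l₁ ++ (A, B) :: l₂) T)
      (G : RawT C A (m₁ ++ (A', B') :: m₂) B) (H : RawT C A' h B'),
      HEq (subst l₁ F (subst m₁ G H))
        (subst (l₁ ++ m₁)
          ((subst l₁ F G).castL (by simp)
            (l' := (l₁ ++ m₁) ++ (A', B') :: (m₂ ++ l₂))) H)) ∧
    -- parallel associativity: substitutions into distinct holes commute
    (∀ {X T A B A' B' : C} (l₁ l₂ l₃ g h : List (C × C))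
      (F : RawT C X (l₁ ++ (A, B) :: (l₂ ++ (A', B') :: l₃)) T)
      (G : RawT C A g B) (H : RawT C A' h B'),
      HEq
        (subst (l₁ ++ g ++ l₂)
          ((subst l₁ F G).castL (by simp)
            (l' := (l₁ ++ g ++ l₂) ++ (A', B') :: l₃)) H)
        (subst l₁
          ((subst (l₁ ++ (A, B) :: l₂)
              (F.castL (by simp) (l' := (l₁ ++ (A, B) :: l₂) ++ (A', B') :: l₃)) H).castL
            (by simp) (l' := l₁ ++ (A, B) :: (l₂ ++ h ++ l₃))) G)) := by
  refine ⟨?_, ?_, ?_, ?_⟩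
  · intro X T A B l₁ l₂ F
    exact eq_of_heq ((subst_idRaw l₁ F).trans (castL_heq _ F).symm)
  · intro A B l' G
    show HEq (((whisk 1 1 G).append (nil (eqToHom (by simp)))).precomp
      (eqToHom (by simp))) G
    exact ((precomp_eqToHom_heq _ _).trans
      ((append_nil_right_heq _ _).trans (postcomp_eqToHom_heq _ _))).trans (whisk_one G)
  · intro X T A B A' B' l₁ l₂ m₁ m₂ h F G H
    exact nested_assoc l₁ F G H (by simp)
  · intro X T A B A' B' l₁ l₂ l₃ g h F G H
    exact parallel_assoc l₁ F G H (by simp) (by simp) (by simp)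
end

section
/- There is an identity-on-objects multifunctor q from the multicategory of raw optics over a strict monoidal category C to the symmetric multicategory of diagram contexts over C, gluing each raw optic (f₀,...,fₙ) to the diagram context f₀ ⨾ (id_{M₁}⊗x₁⊗id_{N₁}) ⨾ f₁ ⨾ ... ⨾ (id_{Mₙ}⊗xₙ⊗id_{Nₙ}) ⨾ fₙ, and this multifunctor is full on the symmetrization: every diagram context arises as q of some raw optic after permuting hole order. -/
open CategoryTheory

/-- Diagram contexts over a strict monoidal category `C`: formal terms built from
morphisms of `C`, named typed holes, sequential and parallel composition. -/
inductive CTm (C : Type u) [Category.{v} C] [Monoid C] [SMC C] : C → C → Type (max u v)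
  | of {X Y : C} (f : X ⟶ Y) : CTm C X Y
  | hole (n : ℕ) (A B : C) : CTm C A B
  | seq {X Y Z : C} : CTm C X Y → CTm C Y Z → CTm C X Z
  | par {X Y X' Y' : C} : CTm C X Y → CTm C X' Y' → CTm C (X * X') (Y * Y')

namespace CTm

variable {C : Type u} [Category.{v} C] [Monoid C] [SMC C]

def castc {X X' Y Y' : C} (h1 : X = X') (h2 : Y = Y') (t : CTm C X Y) : CTm C X' Y' := by
  subst h1; subst h2; exact t

/-- Renaming of holes. -/
def rename (ρ : ℕ → ℕ) : ∀ {X Y : C}, CTm C X Y → CTm C X Y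
  | _, _, .of f => .of f
  | _, _, .hole n A B => .hole (ρ n) A B
  | _, _, .seq a b => .seq (a.rename ρ) (b.rename ρ)
  | _, _, .par a b => .par (a.rename ρ) (b.rename ρ)

/-- The list of (named, typed) holes occurring in a diagram context, in order. -/
def holesOf : ∀ {X Y : C}, CTm C X Y → List (ℕ × C × C)
  | _, _, .of _ => []
  | _, _, .hole n A B => [(n, A, B)]
  | _, _, .seq a b => a.holesOf ++ b.holesOf
  | _, _, .par a b => a.holesOf ++ b.holesOf

/-- Filling the holes named `n` of type `⟨A|B⟩` with a diagram context `u`. -/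
def fill [DecidableEq C] (n : ℕ) {A B : C} (u : CTm C A B) :
    ∀ {X Y : C}, CTm C X Y → CTm C X Y
  | _, _, .of f => .of f
  | _, _, .hole m A' B' =>
      if h : m = n ∧ A = A' ∧ B = B' then u.castc h.2.1 h.2.2 else .hole m A' B'
  | _, _, .seq a b => .seq (fill n u a) (fill n u b)
  | _, _, .par a b => .par (fill n u a) (fill n u b)

/-- Evaluation of a hole-free diagram context as a morphism of `C`. -/
def evalO : ∀ {X Y : C}, CTm C X Y → Option (X ⟶ Y)
  | _, _, .of f => some f
  | _, _, .hole _ _ _ => none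
  | _, _, .seq a b => do pure ((← a.evalO) ≫ (← b.evalO))
  | _, _, .par a b => do pure (SMC.tens (← a.evalO) (← b.evalO))

end CTm

/-- Equality of diagram contexts over a strict monoidal category: the congruence
generated by the strict monoidal equations together with the identification of formal
composites of morphisms of `C` with actual composites in `C`. -/
inductive CTmEq (C : Type u) [Category.{v} C] [Monoid C] [SMC C] :
    ∀ {X Y : C}, CTm C X Y → CTm C X Y → Prop
  | refl {X Y} (t : CTm C X Y) : CTmEq C t t
  | symm {X Y} {t u : CTm C X Y} : CTmEq C t u → CTmEq C u t
  | trans {X Y} {t u v : CTm C X Y} : CTmEq C t u → CTmEq C u v → CTmEq C t v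
  | seq_congr {X Y Z} {t t' : CTm C X Y} {u u' : CTm C Y Z} :
      CTmEq C t t' → CTmEq C u u' → CTmEq C (t.seq u) (t'.seq u')
  | par_congr {X Y X' Y'} {t t' : CTm C X Y} {u u' : CTm C X' Y'} :
      CTmEq C t t' → CTmEq C u u' → CTmEq C (t.par u) (t'.par u')
  | of_comp {X Y Z} (f : X ⟶ Y) (g : Y ⟶ Z) :
      CTmEq C (.of (f ≫ g)) ((CTm.of f).seq (.of g))
  | of_tens {X Y X' Y'} (f : X ⟶ Y) (g : X' ⟶ Y') :
      CTmEq C (.of (SMC.tens f g)) ((CTm.of f).par (.of g))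
  | seq_assoc {W X Y Z} (t₁ : CTm C W X) (t₂ : CTm C X Y) (t₃ : CTm C Y Z) :
      CTmEq C ((t₁.seq t₂).seq t₃) (t₁.seq (t₂.seq t₃))
  | seq_id_right {X Y} (t : CTm C X Y) : CTmEq C (t.seq (.of (𝟙 Y))) t
  | seq_id_left {X Y} (t : CTm C X Y) : CTmEq C ((CTm.of (𝟙 X)).seq t) t
  | par_assoc {X₁ Y₁ X₂ Y₂ X₃ Y₃} (t₁ : CTm C X₁ Y₁) (t₂ : CTm C X₂ Y₂) (t₃ : CTm C X₃ Y₃) :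
      CTmEq C (((t₁.par t₂).par t₃).castc (mul_assoc X₁ X₂ X₃) (mul_assoc Y₁ Y₂ Y₃))
        (t₁.par (t₂.par t₃))
  | par_one_left {X Y} (t : CTm C X Y) :
      CTmEq C (((CTm.of (𝟙 (1 : C))).par t).castc (one_mul X) (one_mul Y)) t
  | par_one_right {X Y} (t : CTm C X Y) :
      CTmEq C ((t.par (.of (𝟙 (1 : C)))).castc (mul_one X) (mul_one Y)) t
  | interchange {X Y Z X' Y' Z'} (t₁ : CTm C X Y) (t₂ : CTm C Y Z)
      (t₃ : CTm C X' Y') (t₄ : CTm C Y' Z') :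
      CTmEq C ((t₁.seq t₂).par (t₃.seq t₄)) ((t₁.par t₃).seq (t₂.par t₄))
  | cast_eq {X X' Y Y'} (h1 : X = X') (h2 : Y = Y') (t : CTm C X Y) :
      CTmEq C (t.castc h1 h2) ((CTm.of (CategoryTheory.eqToHom h1.symm)).seq
        (t.seq (.of (CategoryTheory.eqToHom h2))))

/-- Gluing a raw optic into a diagram context, numbering its holes `k, k+1, …`
from left to right. -/
def RawT.glue {C : Type u} [Category.{v} C] [Monoid C] [SMC C] :
    ∀ {X T : C} {l : List (C × C)}, ℕ → RawT C X l T → CTm C X T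
  | _, _, _, _, .nil f => .of f
  | _, _, _, k, .cons (A := A) (B := B) M N f rest =>
      (CTm.of f).seq
        ((((CTm.of (𝟙 M)).par (.hole k A B)).par (.of (𝟙 N))).seq (rest.glue (k + 1)))

/-!
Gluing turns the operations that build raw optics into the corresponding operations on
diagram contexts, modulo the strict monoidal equations: precomposition and concatenation
become sequential composition, and `whisk M N` becomes `𝟙 M ⊗ - ⊗ 𝟙 N`, using
`𝟙 (M * M') = 𝟙 M ⊗ 𝟙 M'` and the interchange law. Composition of raw optics is
concatenation with a whiskered copy of the inner optic, so functoriality follows by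
induction on the position of the substituted hole, keeping track of the names of the holes.
Fullness is a structural induction on diagram contexts: a hole is the identity optic, `seq`
is concatenation and `par` is `(r ⊗ 𝟙) ⨾ (𝟙 ⊗ s)`. The holes of the optic so obtained come
in the order in which they occur in the term, which is a permutation of the given order.
-/

namespace CTm

variable {α : Type*}

def holeNames (hs : List (ℕ × α)) (i : ℕ) : ℕ := (hs.map Prod.fst).getD i 0

theorem holeNames_append_of_lt {hs : List (ℕ × α)} (hs' : List (ℕ × α)) {i : ℕ}
    (h : i < hs.length) : holeNames (hs ++ hs') i = holeNames hs i := by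
  rw [holeNames, holeNames, List.map_append, List.getD_append _ _ _ _ (by simpa using h)]

theorem holeNames_append_add (hs hs' : List (ℕ × α)) (i : ℕ) :
    holeNames (hs ++ hs') (hs.length + i) = holeNames hs' i := by
  rw [holeNames, holeNames, List.map_append, List.getD_append_right _ _ _ _ (by simp)]
  simp

variable {C : Type u} [Category.{v} C] [Monoid C] [SMC C]

theorem castc_castc {X X' X'' Y Y' Y'' : C} (h₁ : X = X') (h₂ : Y = Y') (g₁ : X' = X'')
    (g₂ : Y' = Y'') (t : CTm C X Y) :
    (t.castc h₁ h₂).castc g₁ g₂ = t.castc (h₁.trans g₁) (h₂.trans g₂) := by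
  subst h₁ h₂ g₁ g₂; rfl

theorem par_castc_left {X X' Y Y' Z W : C} (h₁ : X = X') (h₂ : Y = Y') (t : CTm C X Y)
    (u : CTm C Z W) :
    (t.castc h₁ h₂).par u = (t.par u).castc (congrArg (· * Z) h₁) (congrArg (· * W) h₂) := by
  subst h₁ h₂; rfl

theorem castc_seq_castc {X X' Y Y' Z Z' : C} (h₁ : X = X') (h₂ : Y = Y') (h₃ : Z = Z')
    (t : CTm C X Y) (u : CTm C Y Z) :
    (t.castc h₁ h₂).seq (u.castc h₂ h₃) = (t.seq u).castc h₁ h₃ := by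
  subst h₁ h₂ h₃; rfl

theorem rename_castc {X X' Y Y' : C} (h₁ : X = X') (h₂ : Y = Y') (t : CTm C X Y)
    (ρ : ℕ → ℕ) : (t.castc h₁ h₂).rename ρ = (t.rename ρ).castc h₁ h₂ := by
  subst h₁ h₂; rfl

theorem rename_rename {X Y : C} (ρ σ : ℕ → ℕ) (t : CTm C X Y) :
    (t.rename ρ).rename σ = t.rename (σ ∘ ρ) := by
  induction t with
  | of f => rfl
  | hole n A B => rfl
  | seq a b iha ihb => simp only [CTm.rename, iha, ihb]
  | par a b iha ihb => simp only [CTm.rename, iha, ihb]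

theorem rename_id {X Y : C} (t : CTm C X Y) : t.rename id = t := by
  induction t with
  | of f => rfl
  | hole n A B => rfl
  | seq a b iha ihb => simp only [CTm.rename, iha, ihb]
  | par a b iha ihb => simp only [CTm.rename, iha, ihb]

section Fill

variable [DecidableEq C]

theorem fill_hole_self (n : ℕ) {A B : C} (u : CTm C A B) : fill n u (hole n A B) = u := by
  rw [fill, dif_pos ⟨rfl, rfl, rfl⟩]; rfl

theorem fill_hole_of_ne {n m : ℕ} (h : m ≠ n) {A B A' B' : C} (u : CTm C A B) :
    fill n u (hole m A' B') = hole m A' B' := by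
  rw [fill, dif_neg (by tauto)]

end Fill

def whisker {X Y : C} (M N : C) (t : CTm C X Y) : CTm C (M * X * N) (M * Y * N) :=
  ((CTm.of (𝟙 M)).par t).par (.of (𝟙 N))

end CTm

namespace CTmEq

open CTm

variable {C : Type u} [Category.{v} C] [Monoid C] [SMC C]

theorem of_eq {X Y : C} {t u : CTm C X Y} (h : t = u) : CTmEq C t u := h ▸ .refl t

theorem castc {X X' Y Y' : C} (h₁ : X = X') (h₂ : Y = Y') {t u : CTm C X Y}
    (h : CTmEq C t u) : CTmEq C (t.castc h₁ h₂) (u.castc h₁ h₂) := by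
  subst h₁ h₂; exact h

theorem of_castc_left {X X' Y Y' : C} {h₁ : X = X'} {h₂ : Y = Y'} {t : CTm C X Y}
    {u : CTm C X' Y'} (h : CTmEq C (t.castc h₁ h₂) u) :
    CTmEq C t (u.castc h₁.symm h₂.symm) := by
  subst h₁ h₂; exact h

theorem rename (ρ : ℕ → ℕ) {X Y : C} {t u : CTm C X Y} (h : CTmEq C t u) :
    CTmEq C (t.rename ρ) (u.rename ρ) := by
  induction h with
  | refl t => exact .refl _
  | symm _ ih => exact .symm ih
  | trans _ _ ih₁ ih₂ => exact .trans ih₁ ih₂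
  | seq_congr _ _ ih₁ ih₂ => exact .seq_congr ih₁ ih₂
  | par_congr _ _ ih₁ ih₂ => exact .par_congr ih₁ ih₂
  | of_comp f g => exact .of_comp f g
  | of_tens f g => exact .of_tens f g
  | seq_assoc => exact .seq_assoc _ _ _
  | seq_id_right => exact .seq_id_right _
  | seq_id_left => exact .seq_id_left _
  | par_assoc => rw [rename_castc]; exact .par_assoc _ _ _
  | par_one_left => rw [rename_castc]; exact .par_one_left _
  | par_one_right => rw [rename_castc]; exact .par_one_right _
  | interchange => exact .interchange _ _ _ _
  | cast_eq => rw [rename_castc]; exact .cast_eq _ _ _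

theorem par_assoc_castc {X₁ Y₁ X₂ Y₂ X₃ Y₃ : C} (t₁ : CTm C X₁ Y₁) (t₂ : CTm C X₂ Y₂)
    (t₃ : CTm C X₃ Y₃) :
    CTmEq C ((t₁.par t₂).par t₃)
      ((t₁.par (t₂.par t₃)).castc (mul_assoc X₁ X₂ X₃).symm (mul_assoc Y₁ Y₂ Y₃).symm) :=
  of_castc_left (par_assoc t₁ t₂ t₃)

theorem one_par {X Y : C} (t : CTm C X Y) :
    CTmEq C ((CTm.of (𝟙 (1 : C))).par t) (t.castc (one_mul X).symm (one_mul Y).symm) :=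
  of_castc_left (par_one_left t)

theorem par_one {X Y : C} (t : CTm C X Y) :
    CTmEq C (t.par (CTm.of (𝟙 (1 : C)))) (t.castc (mul_one X).symm (mul_one Y).symm) :=
  of_castc_left (par_one_right t)

theorem of_comp_eqToHom_seq_castc {X Y Y' Z : C} (f : X ⟶ Y) (h : Y = Y') (t : CTm C Y Z) :
    CTmEq C ((CTm.of (f ≫ eqToHom h)).seq (t.castc h rfl)) ((CTm.of f).seq t) := by
  subst h
  rw [eqToHom_refl, Category.comp_id]
  exact .refl _

theorem eqToHom_seq_castc_seq {X X' Y Y' : C} (h₁ : X = X') (h₂ : Y = Y') (t : CTm C X Y) :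
    CTmEq C ((CTm.of (eqToHom h₁)).seq ((t.castc h₁ h₂).seq (.of (eqToHom h₂.symm)))) t := by
  subst h₁ h₂
  exact .trans (.seq_id_left _) (.seq_id_right _)

theorem of_id_eq_seq (X : C) : CTmEq C (CTm.of (𝟙 X)) ((CTm.of (𝟙 X)).seq (.of (𝟙 X))) :=
  .trans (of_eq (by rw [Category.id_comp])) (.of_comp _ _)

theorem of_id_par_of_id (M N : C) :
    CTmEq C ((CTm.of (𝟙 M)).par (.of (𝟙 N))) (.of (𝟙 (M * N))) :=
  .trans (.symm (.of_tens _ _)) (of_eq (by rw [SMC.tens_id]))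

theorem whisker_seq {X Y Z : C} (M N : C) (t : CTm C X Y) (u : CTm C Y Z) :
    CTmEq C ((t.seq u).whisker M N) ((t.whisker M N).seq (u.whisker M N)) :=
  .trans (.par_congr (.trans (.par_congr (of_id_eq_seq M) (.refl _)) (.interchange _ _ _ _))
    (of_id_eq_seq N)) (.interchange _ _ _ _)

theorem whisker_of {X Y : C} (M N : C) (f : X ⟶ Y) :
    CTmEq C ((CTm.of f).whisker M N) (.of (SMC.tens (SMC.tens (𝟙 M) f) (𝟙 N))) :=
  .symm (.trans (.of_tens _ _) (.par_congr (.of_tens _ _) (.refl _)))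

theorem whisker_one_left {X Y : C} (N : C) (t : CTm C X Y) :
    CTmEq C (t.whisker 1 N) ((t.par (.of (𝟙 N))).castc (by simp) (by simp)) :=
  .trans (.par_congr (one_par t) (.refl _)) (of_eq (par_castc_left _ _ _ _))

theorem whisker_one_right {X Y : C} (M : C) (t : CTm C X Y) :
    CTmEq C (t.whisker M 1) (((CTm.of (𝟙 M)).par t).castc (by simp) (by simp)) :=
  par_one _

theorem whisker_mul {A B : C} (M M' N' N : C) (t : CTm C A B) :
    CTmEq C (t.whisker (M * M') (N' * N))
      (((t.whisker M' N').whisker M N).castc (by simp [mul_assoc]) (by simp [mul_assoc])) := by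
  refine .trans (.par_congr (.par_congr (of_id_par_of_id M M').symm (.refl t))
    (of_id_par_of_id N' N).symm) ?_
  refine .trans (.par_congr (par_assoc_castc _ _ _) (.refl _)) ?_
  rw [par_castc_left]
  refine .trans (.castc _ _ (.symm (.par_assoc _ _ _))) ?_
  refine .trans (.castc _ _ (.castc _ _ (.par_congr (par_assoc_castc _ _ _) (.refl _)))) ?_
  rw [par_castc_left, castc_castc, castc_castc]
  exact .refl _

end CTmEq

namespace RawT

open CTm

variable {C : Type u} [Category.{v} C] [Monoid C] [SMC C]

theorem glue_castSrc {X X' T : C} {l : List (C × C)} (h : X = X') (r : RawT C X l T)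
    (k : ℕ) : (r.castSrc h).glue k = (r.glue k).castc h rfl := by
  subst h; rfl

theorem glue_castL {X T : C} {l l' : List (C × C)} (h : l = l') (r : RawT C X l T)
    (k : ℕ) : (r.castL h).glue k = r.glue k := by
  subst h; rfl

theorem glue_precomp {W X T : C} {l : List (C × C)} (e : W ⟶ X) (r : RawT C X l T)
    (k : ℕ) : CTmEq C ((r.precomp e).glue k) ((CTm.of e).seq (r.glue k)) := by
  cases r with
  | nil f => exact .of_comp e f
  | cons M N f rest => exact .trans (.seq_congr (.of_comp e f) (.refl _)) (.seq_assoc _ _ _)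

theorem glue_append {X T U : C} {l l' : List (C × C)} (r : RawT C X l T)
    (s : RawT C T l' U) (k : ℕ) :
    CTmEq C ((r.append s).glue k) ((r.glue k).seq (s.glue (k + l.length))) := by
  induction r generalizing k with
  | nil f => exact glue_precomp f s k
  | cons M N f rest ih =>
      have h := ih s (k + 1)
      rw [Nat.add_right_comm] at h
      exact .trans (.seq_congr (.refl _) (.trans (.seq_congr (.refl _) h)
        (.symm (.seq_assoc _ _ _)))) (.symm (.seq_assoc _ _ _))

theorem glue_whisk {X T : C} {l : List (C × C)} (M N : C) (r : RawT C X l T) (k : ℕ) :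
    CTmEq C ((r.whisk M N).glue k) ((r.glue k).whisker M N) := by
  induction r generalizing k with
  | nil f => exact .symm (CTmEq.whisker_of M N f)
  | cons M' N' f rest ih =>
      simp only [whisk, glue, glue_castSrc]
      refine .trans (.seq_congr (.refl _) (.seq_congr (CTmEq.whisker_mul M M' N' N _)
        (.refl _))) ?_
      rw [castc_seq_castc]
      refine .trans (CTmEq.of_comp_eqToHom_seq_castc _ _ _) (.symm ?_)
      refine .trans (CTmEq.whisker_seq M N _ _) (.seq_congr (CTmEq.whisker_of M N f) ?_)
      exact .trans (CTmEq.whisker_seq M N _ _) (.seq_congr (.refl _) (ih (k + 1)).symm)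

theorem glue_idRaw (A B : C) : CTmEq C ((idRaw A B).glue 0) (.hole 0 A B) :=
  .trans (.seq_congr (.refl _) (.seq_congr (.trans (CTmEq.whisker_one_left 1 _)
    (.castc _ _ (CTmEq.par_one _))) (.refl _)))
    (by rw [castc_castc]; exact CTmEq.eqToHom_seq_castc_seq _ _ _)

def castTgt {X T T' : C} {l : List (C × C)} (h : T = T') (r : RawT C X l T) :
    RawT C X l T' := by
  subst h; exact r

theorem glue_castTgt {X T T' : C} {l : List (C × C)} (h : T = T') (r : RawT C X l T)
    (k : ℕ) : (r.castTgt h).glue k = (r.glue k).castc rfl h := by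
  subst h; rfl

def tensor {X Y X' Y' : C} {l l' : List (C × C)} (r : RawT C X l Y) (s : RawT C X' l' Y') :
    RawT C (X * X') (l ++ l') (Y * Y') :=
  (((r.whisk 1 X').castSrc (by simp)).castTgt (T' := Y * X') (by simp)).append
    (((s.whisk Y 1).castSrc (by simp)).castTgt (by simp))

theorem glue_tensor {X Y X' Y' : C} {l l' : List (C × C)} (r : RawT C X l Y)
    (s : RawT C X' l' Y') (k : ℕ) :
    CTmEq C ((r.tensor s).glue k) ((r.glue k).par (s.glue (k + l.length))) := by
  refine .trans (glue_append _ _ k) ?_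
  simp only [glue_castTgt, glue_castSrc, castc_castc]
  refine .trans (.seq_congr (.castc _ _ (.trans (glue_whisk 1 X' r k)
    (CTmEq.whisker_one_left X' _))) (.castc _ _ (.trans (glue_whisk Y 1 s _)
    (CTmEq.whisker_one_right Y _)))) ?_
  rw [castc_castc, castc_castc]
  exact .trans (.symm (.interchange _ _ _ _)) (.par_congr (.seq_id_right _) (.seq_id_left _))

theorem rename_glue {X T : C} {l : List (C × C)} (r : RawT C X l T) {ρ σ : ℕ → ℕ} {k k' : ℕ}
    (h : ∀ i < l.length, ρ (k + i) = σ (k' + i)) :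
    (r.glue k).rename ρ = (r.glue k').rename σ := by
  induction r generalizing k k' with
  | nil f => rfl
  | cons M N f rest ih =>
      have h₀ := h 0 (by simp)
      simp only [Nat.add_zero] at h₀
      simp only [glue, CTm.rename, h₀]
      rw [ih (k := k + 1) (k' := k' + 1) fun i hi => by
        rw [Nat.add_assoc, Nat.add_comm 1 i, Nat.add_assoc, Nat.add_comm 1 i]
        exact h (i + 1) (by simpa using hi)]

theorem rename_glue_eq_glue {X T : C} {l : List (C × C)} (r : RawT C X l T) {ρ : ℕ → ℕ}
    {k k' : ℕ} (h : ∀ i < l.length, ρ (k + i) = k' + i) : (r.glue k).rename ρ = r.glue k' :=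
  (rename_glue r (σ := id) h).trans (rename_id _)

theorem rename_glue_holeNames_append_left {X Y : C} {hs : List (ℕ × C × C)}
    (hs' : List (ℕ × C × C)) (r : RawT C X (hs.map Prod.snd) Y) :
    (r.glue 0).rename (holeNames (hs ++ hs')) = (r.glue 0).rename (holeNames hs) :=
  rename_glue r fun _ hi => holeNames_append_of_lt _ (by simpa using hi)

theorem rename_glue_holeNames_append_right {X Y : C} (hs : List (ℕ × C × C))
    {hs' : List (ℕ × C × C)} (r : RawT C X (hs'.map Prod.snd) Y) :
    (r.glue (0 + (hs.map Prod.snd).length)).rename (holeNames (hs ++ hs')) =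
      (r.glue 0).rename (holeNames hs') :=
  rename_glue r fun i _ => by simpa using holeNames_append_add hs _ i

theorem fill_glue_of_lt [DecidableEq C] {X T : C} {l : List (C × C)} (r : RawT C X l T)
    {n k : ℕ} (h : n < k) {A B : C} (u : CTm C A B) : fill n u (r.glue k) = r.glue k := by
  induction r generalizing k with
  | nil f => rfl
  | cons M N f rest ih =>
      simp only [glue, fill.eq_1, fill.eq_3, fill.eq_4, fill_hole_of_ne h.ne',
        ih (Nat.lt_succ_of_lt h)]

/-- After hole `i` of a raw optic with `n` holes has been filled with the `m` holes of
another one, renamed to the fresh names `n, …, n + m - 1`, this renaming restores the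
consecutive numbering of the holes of the composite. -/
def substRenaming (i n m j : ℕ) : ℕ :=
  if j < i then j else if n ≤ j then j - n + i else j + m - 1

theorem glue_subst [DecidableEq C] (l₁ : List (C × C)) {l₂ : List (C × C)} {X T A B : C}
    {l' : List (C × C)} (F : RawT C X (l₁ ++ (A, B) :: l₂) T) (G : RawT C A l' B) (k : ℕ) :
    CTmEq C ((subst l₁ F G).glue k)
      ((fill (l₁.length + k) ((G.glue 0).rename (· + ((l₁ ++ (A, B) :: l₂).length + k)))
        (F.glue k)).rename
          (substRenaming (l₁.length + k) ((l₁ ++ (A, B) :: l₂).length + k) l'.length)) := by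
  induction l₁ generalizing X k with
  | nil =>
    cases F with
    | cons M N f rest =>
      simp only [List.nil_append, List.length_nil, Nat.zero_add, List.length_cons]
      have hG : ((G.glue 0).rename (· + (l₂.length + 1 + k))).rename
          (substRenaming k (l₂.length + 1 + k) l'.length) = G.glue k := by
        rw [rename_rename]
        exact rename_glue_eq_glue G fun i hi => by
          simp only [Function.comp_apply, substRenaming]; split_ifs <;> omega
      have hrest : (rest.glue (k + 1)).rename (substRenaming k (l₂.length + 1 + k) l'.length)
          = rest.glue (k + l'.length) :=
        rename_glue_eq_glue rest fun i hi => by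
          simp only [substRenaming]; split_ifs <;> omega
      simp only [glue, fill.eq_1, fill.eq_3, fill.eq_4, fill_hole_self,
        fill_glue_of_lt rest (Nat.lt_succ_self k), CTm.rename, hG, hrest]
      exact (glue_precomp f _ k).trans (.seq_congr (.refl _)
        ((glue_append _ rest k).trans (.seq_congr (glue_whisk M N G k) (.refl _))))
  | cons _ l₁ ih =>
    cases F with
    | cons M N f rest =>
      simp only [List.cons_append, List.length_cons]
      have e : ∀ n, n + 1 + k = n + (k + 1) := fun n => by omega
      simp only [e, glue, fill.eq_1, fill.eq_3, fill.eq_4,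
        fill_hole_of_ne (by omega : k ≠ l₁.length + (k + 1)), CTm.rename]
      refine .seq_congr (.refl _) (.seq_congr (.of_eq ?_) (ih rest (k + 1)))
      rw [substRenaming, if_pos (by omega)]

end RawT

namespace CTm

variable {C : Type u} [Category.{v} C] [Monoid C] [SMC C]

theorem exists_rawT_rename_glue {X Y : C} (t : CTm C X Y) :
    ∃ r : RawT C X (t.holesOf.map Prod.snd) Y,
      CTmEq C ((r.glue 0).rename (holeNames t.holesOf)) t := by
  induction t with
  | of f => exact ⟨.nil f, .refl _⟩
  | hole n A B =>
    exact ⟨RawT.idRaw A B, CTmEq.rename _ (RawT.glue_idRaw A B)⟩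
  | seq a b iha ihb =>
    obtain ⟨ra, ha⟩ := iha
    obtain ⟨rb, hb⟩ := ihb
    refine ⟨(ra.append rb).castL (by simp [holesOf]), ?_⟩
    rw [RawT.glue_castL]
    refine (CTmEq.rename _ (RawT.glue_append ra rb 0)).trans
      (.seq_congr (.trans (.of_eq (RawT.rename_glue_holeNames_append_left _ ra)) ha)
        (.trans (.of_eq (RawT.rename_glue_holeNames_append_right _ rb)) hb))
  | par a b iha ihb =>
    obtain ⟨ra, ha⟩ := iha
    obtain ⟨rb, hb⟩ := ihb
    refine ⟨(ra.tensor rb).castL (by simp [holesOf]), ?_⟩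
    rw [RawT.glue_castL]
    refine (CTmEq.rename _ (RawT.glue_tensor ra rb 0)).trans
      (.par_congr (.trans (.of_eq (RawT.rename_glue_holeNames_append_left _ ra)) ha)
        (.trans (.of_eq (RawT.rename_glue_holeNames_append_right _ rb)) hb))

end CTm

open RawT CTm in
/-- Gluing raw optics into diagram contexts is an identity-on-objects multifunctor
`q` from raw optics to diagram contexts, and it is full on the symmetrization:
it preserves identities and composition (up to the canonical renaming of holes),
and every diagram context arises as `q` of some raw optic after permuting the order
of its holes. -/
theorem glue_multifunctor_full (C : Type u) [Category.{v} C] [Monoid C] [SMC C]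
    [DecidableEq C] :
    -- `q` preserves identities
    (∀ A B : C, CTmEq C ((idRaw A B).glue 0) (.hole 0 A B)) ∧
    -- `q` preserves composition, up to the canonical renaming of hole names
    (∀ {X T A B : C} (l₁ l₂ : List (C × C)) {l' : List (C × C)}
      (F : RawT C X (l₁ ++ (A, B) :: l₂) T) (G : RawT C A l' B),
      CTmEq C ((RawT.subst l₁ F G).glue 0)
        (CTm.rename
          (fun j =>
            if j < l₁.length then j
            else if (l₁ ++ (A, B) :: l₂).length ≤ j then
              j - (l₁ ++ (A, B) :: l₂).length + l₁.length
            else j + l'.length - 1)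
          (CTm.fill l₁.length
            (CTm.rename (· + (l₁ ++ (A, B) :: l₂).length) (G.glue 0)) (F.glue 0)))) ∧
    -- `q` is full up to permutation of holes
    (∀ {X Y : C} (t : CTm C X Y) (l : List (C × C)),
      t.holesOf.Perm (((List.range l.length).zip l).map fun p => (p.1, p.2.1, p.2.2)) →
      ∃ (l' : List (C × C)) (_ : l'.Perm l) (r : RawT C X l' Y) (ρ : ℕ → ℕ),
        CTmEq C ((r.glue 0).rename ρ) t) := by
  refine ⟨glue_idRaw, fun l₁ _ _ F G => glue_subst l₁ F G 0, fun t l hperm => ?_⟩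
  obtain ⟨r, hr⟩ := t.exists_rawT_rename_glue
  refine ⟨_, ?_, r, _, hr⟩
  have hl : ((List.range l.length).zip l).map Prod.snd = l := List.map_snd_zip (by simp)
  simpa [Function.comp_def, hl] using hperm.map Prod.snd
end
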